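/- arXiv:2506.07472 — 6 statements merged into one kernel-verified Lean document; each statement's English description precedes it below -/
import Mathlib

section
/- Let K be a closed subset of [0,1] and let (X₁,…,X_d) be a K-concentrated random vector of real random variables on Ω. Then there exists a family of events {A_p}_{p∈K} such that (i) for each p ∈ K, A_p is a p-tail event for every component Xᵢ, and (ii) for all p, q ∈ K with p > q, A_p ⊆ A_q. -/
open MeasureTheory Filter Set

section Defs

variable {Ω : Type*} [MeasurableSpace Ω]

/-- An atomless probability space: every event can be split to achieve any smaller measure
(Sierpiński's property, equivalent to atomlessness for probability measures). -/
def Atomless (P : Measure Ω) : Prop :=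
  ∀ A : Set Ω, MeasurableSet A → ∀ r : ENNReal, r ≤ P A →
    ∃ B : Set Ω, B ⊆ A ∧ MeasurableSet B ∧ P B = r

/-- `A` is a tail event for `X`: outside a null set, `X ω ≥ X ω'` for `ω ∈ A`, `ω' ∈ Aᶜ`. -/
def IsTailEvent (P : Measure Ω) (X : Ω → ℝ) (A : Set Ω) : Prop :=
  MeasurableSet A ∧ ∃ N : Set Ω, P N = 0 ∧
    ∀ ω ∈ A, ω ∉ N → ∀ ω' ∈ Aᶜ, ω' ∉ N → X ω' ≤ X ω

/-- `A` is a `p`-tail event for `X`: a tail event with `P A = 1 - p`. -/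
def IsPTailEvent (P : Measure Ω) (X : Ω → ℝ) (p : ℝ) (A : Set Ω) : Prop :=
  IsTailEvent P X A ∧ P A = ENNReal.ofReal (1 - p)

/-- A random vector is `p`-concentrated if a single event is a `p`-tail event for every
component. -/
def PConcentrated (P : Measure Ω) {d : ℕ} (X : Fin d → Ω → ℝ) (p : ℝ) : Prop :=
  ∃ A : Set Ω, ∀ i, IsPTailEvent P (X i) p A

/-- A random vector is `K`-concentrated if it is `p`-concentrated for every `p ∈ K`. -/
def KConcentrated (P : Measure Ω) {d : ℕ} (X : Fin d → Ω → ℝ) (K : Set ℝ) : Prop :=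
  ∀ p ∈ K, PConcentrated P X p

/-- Left quantile function `Q_X⁻(p) = inf {x | ℙ(X ≤ x) ≥ p}` (also `VaR_p`). -/
noncomputable def leftQuantile (P : Measure Ω) (X : Ω → ℝ) (p : ℝ) : ℝ :=
  sInf {x : ℝ | ENNReal.ofReal p ≤ P {ω | X ω ≤ x}}

/-- Right quantile function `Q_X⁺(p) = inf {x | ℙ(X ≤ x) > p}` (also `VaR⁺_p`). -/
noncomputable def rightQuantile (P : Measure Ω) (X : Ω → ℝ) (p : ℝ) : ℝ :=
  sInf {x : ℝ | ENNReal.ofReal p < P {ω | X ω ≤ x}}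

/-- `Q_X : [0,1] → ℝ`, equal to `Q_X⁺` at `0` and to `Q_X⁻` on `(0,1]`. -/
noncomputable def Q (P : Measure Ω) (X : Ω → ℝ) (p : ℝ) : ℝ :=
  if p = 0 then rightQuantile P X 0 else leftQuantile P X p

/-- Membership in L∞: essentially bounded (and measurable) random variables. -/
def MemLinf (P : Measure Ω) (X : Ω → ℝ) : Prop :=
  Measurable X ∧ ∃ C : ℝ, ∀ᵐ ω ∂P, |X ω| ≤ C

/-- A functional `ρ` on L∞ is `K`-additive if it is additive on every `K`-concentrated
random vector (of dimension `d ≥ 2`) with essentially bounded components. -/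
def KAdditive (P : Measure Ω) (K : Set ℝ) (ρ : (Ω → ℝ) → ℝ) : Prop :=
  ∀ d : ℕ, 2 ≤ d → ∀ X : Fin d → Ω → ℝ, (∀ i, MemLinf P (X i)) →
    KConcentrated P X K → ρ (∑ i, X i) = ∑ i, ρ (X i)

/-- A pair of random variables is comonotonic. -/
def ComonotonePair (P : Measure Ω) (X Z : Ω → ℝ) : Prop :=
  ∀ᵐ w ∂(P.prod P), 0 ≤ (X w.1 - X w.2) * (Z w.1 - Z w.2)

/-- A random vector is `g`-comonotonic: some random variable `Z` with quantile function `g`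
on `[0,1]` is comonotonic with every component. -/
def GComonotone (P : Measure Ω) {d : ℕ} (g : ℝ → ℝ) (X : Fin d → Ω → ℝ) : Prop :=
  ∃ Z : Ω → ℝ, Measurable Z ∧ (∀ p ∈ Icc (0:ℝ) 1, Q P Z p = g p) ∧
    ∀ i, ComonotonePair P (X i) Z

/-- A functional `ρ` on L∞ is `g`-additive if it is additive on every `g`-comonotonic
random vector (of dimension `d ≥ 2`) with essentially bounded components. -/
def GAdditive (P : Measure Ω) (g : ℝ → ℝ) (ρ : (Ω → ℝ) → ℝ) : Prop :=
  ∀ d : ℕ, 2 ≤ d → ∀ X : Fin d → Ω → ℝ, (∀ i, MemLinf P (X i)) →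
    GComonotone P g X → ρ (∑ i, X i) = ∑ i, ρ (X i)

/-- The distortion riskmetric `I_h`. -/
noncomputable def distortionRM (P : Measure Ω) (h : ℝ → ℝ) (X : Ω → ℝ) : ℝ :=
  (∫ x in Iio (0:ℝ), (h ((P {ω | x < X ω}).toReal) - h 1)) +
    ∫ x in Ioi (0:ℝ), h ((P {ω | x < X ω}).toReal)

/-- The spectral risk measure `ρ_g(X) = ∫₀¹ g(t) Q_X(t) dt`. -/
noncomputable def specRM (P : Measure Ω) (g : ℝ → ℝ) (X : Ω → ℝ) : ℝ :=
  ∫ t in (0:ℝ)..1, g t * Q P X t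

/-- Expected Shortfall at level `p`. -/
noncomputable def ES (P : Measure Ω) (p : ℝ) (X : Ω → ℝ) : ℝ :=
  (1 - p)⁻¹ * ∫ q in p..1, leftQuantile P X q

end Defs

/-- The class 𝒢 of increasing functions on `[0,1]`, right-continuous at `0` and
left-continuous on `(0,1]`. -/
def MemG (g : ℝ → ℝ) : Prop :=
  MonotoneOn g (Icc 0 1) ∧
    Tendsto g (nhdsWithin 0 (Ioi 0)) (nhds (g 0)) ∧
    ∀ p ∈ Ioc (0:ℝ) 1, Tendsto g (nhdsWithin p (Iio p)) (nhds (g p))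

/-- `p` is a point of strict increase on the right of `g`. -/
def IsPSIR (g : ℝ → ℝ) (p : ℝ) : Prop :=
  p ∈ Ico (0:ℝ) 1 ∧ ∀ s ∈ Ioc p 1, g p < g s

/-- `p` is a point of strict increase on the left of `g`. -/
def IsPSIL (g : ℝ → ℝ) (p : ℝ) : Prop :=
  p ∈ Ioc (0:ℝ) 1 ∧ ∀ s ∈ Ico (0:ℝ) p, g s < g p

/-- The set of points of strict increase of `g`. -/
def PSI (g : ℝ → ℝ) : Set ℝ :=
  {p | IsPSIR g p ∨ IsPSIL g p}

/-- `f ≾ g`: there is an increasing `h` with `f = h ∘ g` a.e. on `[0,1]`. -/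
def Prec (f g : ℝ → ℝ) : Prop :=
  ∃ h : ℝ → ℝ, Monotone h ∧
    ∀ᵐ t ∂(volume.restrict (Icc (0:ℝ) 1)), f t = h (g t)

/-- The map `𝒱 : K ↦ (p ↦ sup ((0,p) ∩ K))` (with `sup ∅ = 0`, the junk value of `sSup` in `ℝ`). -/
noncomputable def VK (K : Set ℝ) (p : ℝ) : ℝ :=
  sSup (Ioo (0:ℝ) p ∩ K)

/-- A risk spectrum: a nonnegative element of 𝒢 integrating to 1. -/
def IsRiskSpectrum (g : ℝ → ℝ) : Prop :=
  MemG g ∧ (∀ t ∈ Icc (0:ℝ) 1, 0 ≤ g t) ∧ (∫ t in (0:ℝ)..1, g t) = 1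
section Aux

variable {Ω : Type*} [MeasurableSpace Ω] (P : Measure Ω)

lemma isTailEvent_univ (X : Ω → ℝ) : IsTailEvent P X univ :=
  ⟨MeasurableSet.univ, ∅, measure_empty, fun ω _ _ ω' hω' _ => absurd hω' (by simp)⟩

lemma isTailEvent_empty (X : Ω → ℝ) : IsTailEvent P X ∅ :=
  ⟨MeasurableSet.empty, ∅, measure_empty, fun ω hω => absurd hω (by simp)⟩

lemma isTailEvent_compl {X : Ω → ℝ} {A : Set Ω} (h : IsTailEvent P X A) :
    IsTailEvent P (fun ω => -(X ω)) Aᶜ := by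
  obtain ⟨hm, N, hN, hT⟩ := h
  refine ⟨hm.compl, N, hN, fun ω hω hωN ω' hω' hω'N => ?_⟩
  simp only [compl_compl] at hω'
  exact neg_le_neg (hT ω' hω' hω'N ω hω hωN)

lemma isTailEvent_iInter {X : Ω → ℝ} {A : ℕ → Set Ω} (h : ∀ n, IsTailEvent P X (A n)) :
    IsTailEvent P X (⋂ n, A n) := by
  choose hm N hN hT using h
  refine ⟨MeasurableSet.iInter hm, ⋃ n, N n, measure_iUnion_null hN, ?_⟩
  intro ω hω hωN ω' hω' hω'N
  rw [mem_compl_iff, mem_iInter] at hω'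
  push_neg at hω'
  obtain ⟨n, hn⟩ := hω'
  exact hT n ω (mem_iInter.1 hω n) (fun c => hωN (mem_iUnion.2 ⟨n, c⟩)) ω' hn
    (fun c => hω'N (mem_iUnion.2 ⟨n, c⟩))

lemma isTailEvent_iUnion {X : Ω → ℝ} {A : ℕ → Set Ω} (h : ∀ n, IsTailEvent P X (A n)) :
    IsTailEvent P X (⋃ n, A n) := by
  choose hm N hN hT using h
  refine ⟨MeasurableSet.iUnion hm, ⋃ n, N n, measure_iUnion_null hN, ?_⟩
  intro ω hω hωN ω' hω' hω'N
  obtain ⟨n, hn⟩ := mem_iUnion.1 hω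
  rw [mem_compl_iff, mem_iUnion] at hω'
  push_neg at hω'
  exact hT n ω hn (fun c => hωN (mem_iUnion.2 ⟨n, c⟩)) ω' (hω' n)
    (fun c => hω'N (mem_iUnion.2 ⟨n, c⟩))

variable [IsProbabilityMeasure P]

lemma swap_down {ι : Type*} {X : ι → Ω → ℝ} {B L : Set Ω}
    (hP : Atomless P) (hBm : MeasurableSet B) (hLm : MeasurableSet L)
    (hBt : ∀ i, IsTailEvent P (X i) B) (hLt : ∀ i, IsTailEvent P (X i) L)
    (hle : P B ≤ P L) :
    ∃ B', MeasurableSet B' ∧ B ∩ L ⊆ B' ∧ B' ⊆ L ∧ P B' = P B ∧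
      ∀ i, IsTailEvent P (X i) B' := by
  have h1 : P (B ∩ L) + P (B \ L) = P B := measure_inter_add_diff B hLm
  have h2 : P (B ∩ L) + P (L \ B) = P L := by
    rw [inter_comm]; exact measure_inter_add_diff L hBm
  have hfin : P (B ∩ L) ≠ ⊤ := measure_ne_top P _
  have hdle : P (B \ L) ≤ P (L \ B) := by
    rw [← h1, ← h2] at hle
    exact (ENNReal.add_le_add_iff_left hfin).1 hle
  by_cases h0 : P (B \ L) = 0
  · refine ⟨B ∩ L, hBm.inter hLm, subset_rfl, inter_subset_right, ?_, ?_⟩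
    · rw [← h1, h0, add_zero]
    · intro i
      obtain ⟨_, N, hN, hT⟩ := hBt i
      refine ⟨hBm.inter hLm, N ∪ (B \ L), measure_union_null hN h0, ?_⟩
      intro ω hω hωN ω' hω' hω'N
      have hωB : ω' ∉ B := by
        intro hB
        rcases Classical.em (ω' ∈ L) with hL | hL
        · exact hω' ⟨hB, hL⟩
        · exact hω'N (Or.inr ⟨hB, hL⟩)
      exact hT ω hω.1 (fun c => hωN (Or.inl c)) ω' hωB (fun c => hω'N (Or.inl c))
  · obtain ⟨C, hCsub, hCm, hCP⟩ := hP (L \ B) (hLm.diff hBm) (P (B \ L)) hdle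
    have hdisj : Disjoint (B ∩ L) C := by
      refine Set.disjoint_left.2 fun ω hω hωC => ?_
      exact (hCsub hωC).2 hω.1
    refine ⟨(B ∩ L) ∪ C, (hBm.inter hLm).union hCm, subset_union_left,
      union_subset inter_subset_right (hCsub.trans diff_subset), ?_, ?_⟩
    · rw [measure_union hdisj hCm, hCP, h1]
    · intro i
      obtain ⟨_, NB, hNB, hTB⟩ := hBt i
      obtain ⟨_, NL, hNL, hTL⟩ := hLt i
      have hw : ∃ ω₀, ω₀ ∈ B \ L ∧ ω₀ ∉ NB ∪ NL := by
        by_contra hc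
        push_neg at hc
        refine h0 (measure_mono_null (fun ω hω => hc ω hω) (measure_union_null hNB hNL))
      obtain ⟨ω₀, hω₀, hω₀N⟩ := hw
      refine ⟨(hBm.inter hLm).union hCm, NB ∪ NL, measure_union_null hNB hNL, ?_⟩
      intro ω hω hωN ω' hω' hω'N
      have hωNB : ω ∉ NB := fun c => hωN (Or.inl c)
      have hωNL : ω ∉ NL := fun c => hωN (Or.inr c)
      have hω'NB : ω' ∉ NB := fun c => hω'N (Or.inl c)
      have hω'NL : ω' ∉ NL := fun c => hω'N (Or.inr c)
      have hω'BL : ω' ∉ B ∩ L := fun c => hω' (Or.inl c)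
      have hω'C : ω' ∉ C := fun c => hω' (Or.inr c)
      rcases hω with h | h
      · rcases Classical.em (ω' ∈ B) with hB' | hB'
        · have hL' : ω' ∉ L := fun c => hω'BL ⟨hB', c⟩
          exact hTL ω h.2 hωNL ω' hL' hω'NL
        · exact hTB ω h.1 hωNB ω' hB' hω'NB
      · have hωLB : ω ∈ L \ B := hCsub h
        rcases Classical.em (ω' ∈ L) with hL' | hL'
        · have hB' : ω' ∉ B := fun c => hω'BL ⟨c, hL'⟩
          have e1 : X i ω = X i ω₀ :=
            le_antisymm (hTB ω₀ hω₀.1 (fun c => hω₀N (Or.inl c)) ω hωLB.2 hωNB)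
              (hTL ω hωLB.1 hωNL ω₀ hω₀.2 (fun c => hω₀N (Or.inr c)))
          have e2 : X i ω' = X i ω₀ :=
            le_antisymm (hTB ω₀ hω₀.1 (fun c => hω₀N (Or.inl c)) ω' hB' hω'NB)
              (hTL ω' hL' hω'NL ω₀ hω₀.2 (fun c => hω₀N (Or.inr c)))
          rw [e1, e2]
        · exact hTL ω hωLB.1 hωNL ω' hL' hω'NL

lemma swap_up {ι : Type*} {X : ι → Ω → ℝ} {B U : Set Ω}
    (hP : Atomless P) (hBm : MeasurableSet B) (hUm : MeasurableSet U)
    (hBt : ∀ i, IsTailEvent P (X i) B) (hUt : ∀ i, IsTailEvent P (X i) U)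
    (hle : P U ≤ P B) :
    ∃ B', MeasurableSet B' ∧ U ⊆ B' ∧ B' ⊆ B ∪ U ∧ P B' = P B ∧
      ∀ i, IsTailEvent P (X i) B' := by
  have h2 : P Bᶜ ≤ P Uᶜ := by
    rw [measure_compl hBm (measure_ne_top P B), measure_compl hUm (measure_ne_top P U)]
    exact tsub_le_tsub_left hle _
  obtain ⟨B₂, hB₂m, hBsub, hB₂U, hB₂P, hB₂t⟩ :=
    swap_down P (X := fun i ω => -(X i ω)) hP hBm.compl hUm.compl
      (fun i => isTailEvent_compl P (hBt i)) (fun i => isTailEvent_compl P (hUt i)) h2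
  refine ⟨B₂ᶜ, hB₂m.compl, subset_compl_comm.1 hB₂U, ?_, ?_, ?_⟩
  · have := compl_subset_compl.2 hBsub
    rwa [compl_inter, compl_compl, compl_compl] at this
  · rw [measure_compl hB₂m (measure_ne_top P B₂), hB₂P,
      measure_compl hBm (measure_ne_top P B), measure_univ,
      ENNReal.sub_sub_cancel ENNReal.one_ne_top prob_le_one]
  · intro i
    have := isTailEvent_compl P (hB₂t i)
    simp only [neg_neg, compl_compl] at this
    exact this

lemma sandwich {ι : Type*} {X : ι → Ω → ℝ} {B U L : Set Ω}
    (hP : Atomless P) (hBm : MeasurableSet B) (hUm : MeasurableSet U)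
    (hLm : MeasurableSet L)
    (hBt : ∀ i, IsTailEvent P (X i) B) (hUt : ∀ i, IsTailEvent P (X i) U)
    (hLt : ∀ i, IsTailEvent P (X i) L)
    (hUL : U ⊆ L) (h1 : P U ≤ P B) (h2 : P B ≤ P L) :
    ∃ A, MeasurableSet A ∧ U ⊆ A ∧ A ⊆ L ∧ P A = P B ∧
      ∀ i, IsTailEvent P (X i) A := by
  obtain ⟨B₁, hB₁m, _, hB₁L, hB₁P, hB₁t⟩ := swap_down P hP hBm hLm hBt hLt h2
  obtain ⟨A, hAm, hUA, hAsub, hAP, hAt⟩ :=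
    swap_up P hP hB₁m hUm hB₁t hUt (h1.trans hB₁P.ge)
  exact ⟨A, hAm, hUA, hAsub.trans (union_subset hB₁L hUL), hAP.trans hB₁P, hAt⟩

end Aux

/-- For a closed `K ⊆ [0,1]` and a `K`-concentrated random vector
`(X₁, …, X_d)` there is a nested family `{A_p}_{p ∈ K}` of common `p`-tail events. -/
theorem stmt_0 {Ω : Type*} [MeasurableSpace Ω] (P : MeasureTheory.Measure Ω)
    [MeasureTheory.IsProbabilityMeasure P] (hP : Atomless P)
    (K : Set ℝ) (hKc : IsClosed K) (hK : K ⊆ Icc 0 1)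
    {d : ℕ} (X : Fin d → Ω → ℝ) (hX : ∀ i, Measurable (X i))
    (hcon : KConcentrated P X K) :
    ∃ A : ℝ → Set Ω,
      (∀ p ∈ K, ∀ i, IsPTailEvent P (X i) p (A p)) ∧
      ∀ p ∈ K, ∀ q ∈ K, q < p → A p ⊆ A q := by
  classical
  rcases Nat.eq_zero_or_pos d with hd | hd
  · subst hd
    exact ⟨fun _ => ∅, fun p _ i => i.elim0, fun p _ q _ _ => subset_rfl⟩
  have i0 : Fin d := ⟨0, hd⟩
  set 𝒮 : Set (Set (ℝ × Set Ω)) :=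
    {G | (∀ x ∈ G, x.1 ∈ K ∧ ∀ i, IsPTailEvent P (X i) x.1 x.2) ∧
      (∀ x ∈ G, ∀ y ∈ G, x.1 = y.1 → x.2 = y.2) ∧
      (∀ x ∈ G, ∀ y ∈ G, y.1 < x.1 → x.2 ⊆ y.2)} with h𝒮
  have hchain : ∀ c ⊆ 𝒮, IsChain (· ⊆ ·) c → ∃ ub ∈ 𝒮, ∀ s ∈ c, s ⊆ ub := by
    intro c hc hch
    refine ⟨⋃₀ c, ⟨?_, ?_, ?_⟩, fun s hs => subset_sUnion_of_mem hs⟩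
    · rintro x ⟨G, hG, hxG⟩
      exact (hc hG).1 x hxG
    · rintro x ⟨G1, hG1, hx1⟩ y ⟨G2, hG2, hy2⟩ hxy
      rcases hch.total hG1 hG2 with h | h
      · exact (hc hG2).2.1 x (h hx1) y hy2 hxy
      · exact (hc hG1).2.1 x hx1 y (h hy2) hxy
    · rintro x ⟨G1, hG1, hx1⟩ y ⟨G2, hG2, hy2⟩ hxy
      rcases hch.total hG1 hG2 with h | h
      · exact (hc hG2).2.2 x (h hx1) y hy2 hxy
      · exact (hc hG1).2.2 x hx1 y (h hy2) hxy
  obtain ⟨M, hM⟩ := zorn_subset 𝒮 hchain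
  obtain ⟨hM1, hM2, hM3⟩ := hM.prop
  -- basic facts about members of M
  have hMtail : ∀ x ∈ M, ∀ i, IsTailEvent P (X i) x.2 := fun x hx i => ((hM1 x hx).2 i).1
  have hMmeas : ∀ x ∈ M, MeasurableSet x.2 := fun x hx => ((hM1 x hx).2 i0).1.1
  have hMP : ∀ x ∈ M, P x.2 = ENNReal.ofReal (1 - x.1) := fun x hx => ((hM1 x hx).2 i0).2
  have key : ∀ p ∈ K, ∃ A, (p, A) ∈ M := by
    by_contra hcontra
    push_neg at hcontra
    obtain ⟨p, hpK, hpA⟩ := hcontra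
    have hp0 : (0:ℝ) ≤ p := (hK hpK).1
    -- construct L
    have hL : ∃ L : Set Ω, MeasurableSet L ∧ (∀ i, IsTailEvent P (X i) L) ∧
        ENNReal.ofReal (1 - p) ≤ P L ∧ (∀ x ∈ M, x.1 < p → L ⊆ x.2) ∧
        (∀ W : Set Ω, (∀ x ∈ M, x.1 < p → W ⊆ x.2) → W ⊆ L) := by
      set Q : Set ℝ := {q | q < p ∧ ∃ A, (q, A) ∈ M} with hQdef
      by_cases hQ : Q.Nonempty
      · have hQbdd : BddAbove Q := ⟨p, fun q hq => hq.1.le⟩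
        set s := sSup Q with hs
        have hsle : s ≤ p := csSup_le hQ fun q hq => hq.1.le
        have hmemQ : ∀ x ∈ M, x.1 < p → x.1 ∈ Q := by
          intro x hx h
          exact ⟨h, x.2, by rwa [Prod.mk.eta]⟩
        by_cases hsQ : s ∈ Q
        · obtain ⟨A, hA⟩ := hsQ.2
          have hsl : s < p := hsQ.1
          refine ⟨A, hMmeas _ hA, hMtail _ hA, ?_, ?_, ?_⟩
          · rw [hMP _ hA]
            exact ENNReal.ofReal_le_ofReal (by linarith)
          · intro x hx hxp
            have hq : x.1 ∈ Q := hmemQ x hx hxp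
            rcases lt_or_eq_of_le (le_csSup hQbdd hq) with h | h
            · exact hM3 (s, A) hA x hx h
            · have := hM2 x hx (s, A) hA h
              rw [this]
          · intro W hW
            exact hW (s, A) hA hsl
        · have hseq : ∀ n : ℕ, ∃ q ∈ Q, s - 1/(n+1) < q := by
            intro n
            exact exists_lt_of_lt_csSup hQ (by
              have : (0:ℝ) < 1/(n+1) := by positivity
              linarith)
          choose q hqQ hqgt using hseq
          choose A hA using fun n => (hqQ n).2
          have hqlt : ∀ n, q n < p := fun n => (hqQ n).1
          have hqles : ∀ n, q n ≤ s := fun n => le_csSup hQbdd (hqQ n)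
          -- nesting among the A n
          have hAnest : ∀ m n, q m < q n → A n ⊆ A m := fun m n h =>
            hM3 (q n, A n) (hA n) (q m, A m) (hA m) h
          have hAeq : ∀ m n, q m = q n → A m = A n := fun m n h =>
            hM2 (q m, A m) (hA m) (q n, A n) (hA n) h
          have hdir : Directed (· ⊇ ·) A := by
            intro m n
            rcases lt_trichotomy (q m) (q n) with h | h | h
            · exact ⟨n, hAnest m n h, subset_rfl⟩
            · exact ⟨n, (hAeq m n h).ge, subset_rfl⟩
            · exact ⟨m, subset_rfl, hAnest n m h⟩
          refine ⟨⋂ n, A n, MeasurableSet.iInter fun n => hMmeas _ (hA n),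
            fun i => isTailEvent_iInter P fun n => hMtail _ (hA n) i, ?_, ?_, ?_⟩
          · rw [Directed.measure_iInter (fun n => (hMmeas _ (hA n)).nullMeasurableSet)
              hdir ⟨0, measure_ne_top P _⟩]
            refine le_iInf fun n => ?_
            rw [hMP _ (hA n)]
            exact ENNReal.ofReal_le_ofReal (by have := hqlt n; linarith)
          · intro x hx hxp
            have hq : x.1 ∈ Q := hmemQ x hx hxp
            have hxs : x.1 < s := lt_of_le_of_ne (le_csSup hQbdd hq)
              (fun h => hsQ (h ▸ hq))
            obtain ⟨n, hn⟩ := exists_nat_one_div_lt (show (0:ℝ) < s - x.1 by linarith)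
            have : x.1 < q n := by
              have := hqgt n
              linarith
            exact (iInter_subset A n).trans (hM3 (q n, A n) (hA n) x hx this)
          · intro W hW
            exact subset_iInter fun n => hW (q n, A n) (hA n) (hqlt n)
      · refine ⟨univ, MeasurableSet.univ, fun i => isTailEvent_univ P (X i), ?_, ?_, ?_⟩
        · rw [measure_univ]
          exact ENNReal.ofReal_le_one.2 (by linarith)
        · intro x hx hxp
          exact absurd ⟨hxp, x.2, by rwa [Prod.mk.eta]⟩ (fun h => hQ ⟨x.1, h⟩)
        · intro W _
          exact subset_univ W
    obtain ⟨L, hLm, hLt, hLP, hLsub, hLmax⟩ := hL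
    -- construct U
    have hU : ∃ U : Set Ω, MeasurableSet U ∧ (∀ i, IsTailEvent P (X i) U) ∧
        P U ≤ ENNReal.ofReal (1 - p) ∧ (∀ x ∈ M, p < x.1 → x.2 ⊆ U) ∧
        (∀ x ∈ M, x.1 < p → U ⊆ x.2) := by
      set R : Set ℝ := {r | p < r ∧ ∃ A, (r, A) ∈ M} with hRdef
      by_cases hR : R.Nonempty
      · have hRbdd : BddBelow R := ⟨p, fun r hr => hr.1.le⟩
        set t := sInf R with ht
        have htge : p ≤ t := le_csInf hR fun r hr => hr.1.le
        have hmemR : ∀ x ∈ M, p < x.1 → x.1 ∈ R := by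
          intro x hx h
          exact ⟨h, x.2, by rwa [Prod.mk.eta]⟩
        by_cases htR : t ∈ R
        · obtain ⟨A, hA⟩ := htR.2
          have htl : p < t := htR.1
          refine ⟨A, hMmeas _ hA, hMtail _ hA, ?_, ?_, ?_⟩
          · rw [hMP _ hA]
            exact ENNReal.ofReal_le_ofReal (by linarith)
          · intro x hx hxp
            have hr : x.1 ∈ R := hmemR x hx hxp
            rcases lt_or_eq_of_le (csInf_le hRbdd hr) with h | h
            · exact hM3 x hx (t, A) hA h
            · have := hM2 x hx (t, A) hA h.symm
              rw [this]
          · intro x hx hxp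
            exact hM3 (t, A) hA x hx (lt_of_lt_of_le hxp htge)
        · have hseq : ∀ n : ℕ, ∃ r ∈ R, r < t + 1/(n+1) := by
            intro n
            exact exists_lt_of_csInf_lt hR (by
              have : (0:ℝ) < 1/(n+1) := by positivity
              linarith)
          choose r hrR hrlt using hseq
          choose A hA using fun n => (hrR n).2
          have hrgt : ∀ n, p < r n := fun n => (hrR n).1
          have hrget : ∀ n, t ≤ r n := fun n => csInf_le hRbdd (hrR n)
          refine ⟨⋃ n, A n, MeasurableSet.iUnion fun n => hMmeas _ (hA n),
            fun i => isTailEvent_iUnion P fun n => hMtail _ (hA n) i, ?_, ?_, ?_⟩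
          · have hdir : Directed (· ⊆ ·) A := by
              intro m n
              rcases lt_trichotomy (r m) (r n) with h | h | h
              · exact ⟨m, subset_rfl, hM3 (r n, A n) (hA n) (r m, A m) (hA m) h⟩
              · exact ⟨m, subset_rfl,
                  (hM2 (r n, A n) (hA n) (r m, A m) (hA m) h.symm).le⟩
              · exact ⟨n, hM3 (r m, A m) (hA m) (r n, A n) (hA n) h, subset_rfl⟩
            rw [Directed.measure_iUnion hdir]
            refine iSup_le fun n => ?_
            rw [hMP _ (hA n)]
            exact ENNReal.ofReal_le_ofReal (by have := hrgt n; linarith)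
          · intro x hx hxp
            have hr' : x.1 ∈ R := hmemR x hx hxp
            have hxt : t < x.1 := lt_of_le_of_ne (csInf_le hRbdd hr')
              (fun h => htR (h ▸ hr'))
            obtain ⟨n, hn⟩ := exists_nat_one_div_lt (show (0:ℝ) < x.1 - t by linarith)
            have : r n < x.1 := by
              have := hrlt n
              linarith
            exact (hM3 x hx (r n, A n) (hA n) this).trans (subset_iUnion A n)
          · intro x hx hxp
            exact iUnion_subset fun n =>
              hM3 (r n, A n) (hA n) x hx (lt_trans hxp (hrgt n))
      · refine ⟨∅, MeasurableSet.empty, fun i => isTailEvent_empty P (X i), ?_, ?_, ?_⟩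
        · simp
        · intro x hx hxp
          exact absurd ⟨hxp, x.2, by rwa [Prod.mk.eta]⟩ (fun h => hR ⟨x.1, h⟩)
        · intro x _ _
          exact empty_subset _
    obtain ⟨U, hUm, hUt, hUP, hUsub, hUsub'⟩ := hU
    have hULsub : U ⊆ L := hLmax U hUsub'
    obtain ⟨B, hB⟩ := hcon p hpK
    have hBP : P B = ENNReal.ofReal (1 - p) := (hB i0).2
    have hBm : MeasurableSet B := (hB i0).1.1
    obtain ⟨Anew, hAm, hUA, hAL, hAP, hAt⟩ := sandwich P hP hBm hUm hLm
      (fun i => (hB i).1) hUt hLt hULsub (by rw [hBP]; exact hUP)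
      (by rw [hBP]; exact hLP)
    have hAP' : P Anew = ENNReal.ofReal (1 - p) := hAP.trans hBP
    have hM'mem : insert (p, Anew) M ∈ 𝒮 := by
      refine ⟨?_, ?_, ?_⟩
      · intro x hx
        rcases mem_insert_iff.1 hx with rfl | hx
        · exact ⟨hpK, fun i => ⟨hAt i, hAP'⟩⟩
        · exact hM1 x hx
      · intro x hx y hy hxy
        rcases mem_insert_iff.1 hx with rfl | hx <;> rcases mem_insert_iff.1 hy with rfl | hy
        · rfl
        · refine absurd (show ((p : ℝ), y.2) ∈ M from ?_) (hpA y.2)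
          have h : p = y.1 := hxy
          rw [h, Prod.mk.eta]; exact hy
        · refine absurd (show ((p : ℝ), x.2) ∈ M from ?_) (hpA x.2)
          have h : x.1 = p := hxy
          rw [← h, Prod.mk.eta]; exact hx
        · exact hM2 x hx y hy hxy
      · intro x hx y hy hxy
        rcases mem_insert_iff.1 hx with rfl | hx <;> rcases mem_insert_iff.1 hy with rfl | hy
        · exact absurd hxy (lt_irrefl p)
        · exact hAL.trans (hLsub y hy hxy)
        · exact (hUsub x hx hxy).trans hUA
        · exact hM3 x hx y hy hxy
    have : insert (p, Anew) M ⊆ M := hM.2 hM'mem (subset_insert _ _)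
    exact hpA Anew (this (mem_insert _ _))
  choose f hf using key
  refine ⟨fun p => if h : p ∈ K then f p h else ∅, ?_, ?_⟩
  · intro p hp i
    simp only [dif_pos hp]
    exact (hM1 (p, f p hp) (hf p hp)).2 i
  · intro p hp q hq hqp
    simp only [dif_pos hp, dif_pos hq]
    exact hM3 (p, f p hp) (hf p hp) (q, f q hq) (hf q hq) hqp
end

section
/- For every subset K ⊆ [0,1] with closure cl(K) in [0,1], a random vector (X₁,…,X_d) of real random variables on Ω is K-concentrated if and only if it is cl(K)-concentrated. -/
open MeasureTheory Filter Set

section AuxProof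

open Topology

variable {Ω : Type*} [MeasurableSpace Ω]

lemma pconc_zero' (P : Measure Ω) [IsProbabilityMeasure P] {d : ℕ} (X : Fin d → Ω → ℝ) :
    PConcentrated P X 0 := by
  refine ⟨Set.univ, fun i => ⟨⟨MeasurableSet.univ, ∅, measure_empty, ?_⟩, by simp⟩⟩
  intro ω _ _ ω' hω' _
  simp at hω'

lemma pconc_one' (P : Measure Ω) [IsProbabilityMeasure P] {d : ℕ} (X : Fin d → Ω → ℝ) :
    PConcentrated P X 1 := by
  refine ⟨∅, fun i => ⟨⟨MeasurableSet.empty, ∅, measure_empty, ?_⟩, by simp⟩⟩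
  intro ω hω
  simp at hω

lemma exists_tail_small (P : Measure Ω) [IsFiniteMeasure P] (X : Ω → ℝ)
    (hX : Measurable X) {ε : ENNReal} (hε : 0 < ε) : ∃ M : ℝ, P {ω | M ≤ X ω} < ε := by
  have hlim : Tendsto (fun k : ℕ => P {ω | (k : ℝ) ≤ X ω}) atTop
      (𝓝 (P (⋂ k : ℕ, {ω | (k : ℝ) ≤ X ω}))) := by
    apply tendsto_measure_iInter_atTop
    · exact fun k => (measurableSet_le measurable_const hX).nullMeasurableSet
    · intro k l hkl ω hω
      simp only [mem_setOf_eq] at hω ⊢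
      exact le_trans (by exact_mod_cast hkl) hω
    · exact ⟨0, measure_ne_top P _⟩
  have hempty : (⋂ k : ℕ, {ω | (k : ℝ) ≤ X ω}) = (∅ : Set Ω) := by
    ext ω
    simp only [mem_iInter, mem_setOf_eq, mem_empty_iff_false, iff_false, not_forall]
    obtain ⟨k, hk⟩ := exists_nat_gt (X ω)
    exact ⟨k, not_le.2 hk⟩
  rw [hempty, measure_empty] at hlim
  obtain ⟨k, hk⟩ := (hlim.eventually_lt_const hε).exists
  exact ⟨k, hk⟩

lemma exists_tail_small_lower (P : Measure Ω) [IsFiniteMeasure P] (X : Ω → ℝ)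
    (hX : Measurable X) {ε : ENNReal} (hε : 0 < ε) : ∃ m : ℝ, P {ω | X ω ≤ m} < ε := by
  obtain ⟨M, hM⟩ := exists_tail_small P (fun ω => -X ω) hX.neg hε
  refine ⟨-M, ?_⟩
  convert hM using 2
  ext ω
  simp only [mem_setOf_eq]
  constructor
  · intro h; linarith
  · intro h; linarith

lemma pconc_limit (P : Measure Ω) [IsProbabilityMeasure P] (hP : Atomless P)
    {d : ℕ} (X : Fin d → Ω → ℝ) (hX : ∀ i, Measurable (X i))
    {p : ℝ} (hp : p ∈ Icc (0:ℝ) 1) (ps : ℕ → ℝ)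
    (hconc : ∀ n, PConcentrated P X (ps n))
    (hlim : Tendsto ps atTop (𝓝 p)) : PConcentrated P X p := by
  rcases eq_or_lt_of_le hp.1 with h0 | h0
  · rw [← h0]; exact pconc_zero' P X
  rcases eq_or_lt_of_le hp.2 with h1 | h1
  · rw [h1]; exact pconc_one' P X
  rcases Nat.eq_zero_or_pos d with hd | hd
  · subst hd; exact ⟨∅, fun i => i.elim0⟩
  let i0 : Fin d := ⟨0, hd⟩
  have hε_def : ∃ ε : ℝ, ε = min p (1 - p) / 2 := ⟨_, rfl⟩
  obtain ⟨ε, hε_def⟩ := hε_def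
  have hε : 0 < ε := by
    rw [hε_def]
    have := lt_min h0 (by linarith : (0:ℝ) < 1 - p)
    linarith
  have hεp : ε ≤ p / 2 := by
    rw [hε_def]; have := min_le_left p (1 - p); linarith
  have hεq : ε ≤ (1 - p) / 2 := by
    rw [hε_def]; have := min_le_right p (1 - p); linarith
  obtain ⟨n₀, hn₀⟩ := Metric.tendsto_atTop.1 hlim ε hε
  choose A hA using hconc
  choose N hN0 hNt using fun n i => (hA n i).1.2
  set B : ℕ → Set Ω := fun n => A (n + n₀) with hB_def
  set NN : ℕ → Fin d → Set Ω := fun n i => N (n + n₀) i with hNN_def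
  set rs : ℕ → ℝ := fun n => ps (n + n₀) with hrs_def
  have hrs : Tendsto rs atTop (𝓝 p) := hlim.comp (tendsto_add_atTop_nat n₀)
  have hdist : ∀ n, |rs n - p| < ε := fun n => by
    have := hn₀ (n + n₀) (Nat.le_add_left _ _)
    rwa [Real.dist_eq] at this
  have hrs_lb : ∀ n, ε ≤ rs n := fun n => by
    have h := abs_lt.1 (hdist n); linarith
  have hrs_ub : ∀ n, ε ≤ 1 - rs n := fun n => by
    have h := abs_lt.1 (hdist n); linarith
  have hBmeas : ∀ n, MeasurableSet (B n) := fun n => (hA (n + n₀) i0).1.1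
  have hPB : ∀ n, P (B n) = ENNReal.ofReal (1 - rs n) := fun n => (hA (n + n₀) i0).2
  have hNN0 : ∀ n i, P (NN n i) = 0 := fun n i => hN0 (n + n₀) i
  have hNNt : ∀ n i, ∀ ω ∈ B n, ω ∉ NN n i → ∀ ω' ∈ (B n)ᶜ, ω' ∉ NN n i → X i ω' ≤ X i ω :=
    fun n i => hNt (n + n₀) i
  have hPB_pos : ∀ n, P (B n) ≠ 0 := fun n => by
    rw [hPB n]
    exact (ENNReal.ofReal_pos.2 (lt_of_lt_of_le hε (hrs_ub n))).ne'
  have hPB_lt_one : ∀ n, P (B n) < 1 := fun n => by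
    rw [hPB n]
    calc ENNReal.ofReal (1 - rs n) < ENNReal.ofReal 1 :=
          (ENNReal.ofReal_lt_ofReal_iff one_pos).2 (by linarith [hrs_lb n, hε])
      _ = 1 := ENNReal.ofReal_one
  have hPBc : ∀ n, P ((B n)ᶜ) = 1 - P (B n) := fun n => by
    rw [measure_compl (hBmeas n) (measure_ne_top P _), measure_univ]
  have hPBc_pos : ∀ n, P ((B n)ᶜ) ≠ 0 := fun n => by
    rw [hPBc n]
    simp only [ne_eq, tsub_eq_zero_iff_le, not_le]
    exact hPB_lt_one n
  have hBne : ∀ n i, (B n \ NN n i).Nonempty := fun n i =>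
    nonempty_of_measure_ne_zero (by rw [measure_diff_null (hNN0 n i)]; exact hPB_pos n)
  have hBcne : ∀ n i, ((B n)ᶜ \ NN n i).Nonempty := fun n i =>
    nonempty_of_measure_ne_zero (by rw [measure_diff_null (hNN0 n i)]; exact hPBc_pos n)
  set q : ℕ → Fin d → ℝ := fun n i => sSup (X i '' ((B n)ᶜ \ NN n i)) with hq_def
  have hbdd : ∀ n i, BddAbove (X i '' ((B n)ᶜ \ NN n i)) := fun n i => by
    obtain ⟨ω₀, hω₀⟩ := hBne n i
    refine ⟨X i ω₀, ?_⟩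
    rintro y ⟨ω', hω', rfl⟩
    exact hNNt n i ω₀ hω₀.1 hω₀.2 ω' hω'.1 hω'.2
  have hq_le : ∀ n i, ∀ ω ∈ B n, ω ∉ NN n i → q n i ≤ X i ω := by
    intro n i ω hω hωN
    refine csSup_le ((hBcne n i).image _) ?_
    rintro y ⟨ω', hω', rfl⟩
    exact hNNt n i ω hω hωN ω' hω'.1 hω'.2
  have hq_ge : ∀ n i, ∀ ω, ω ∉ B n → ω ∉ NN n i → X i ω ≤ q n i := fun n i ω hω hωN =>
    le_csSup (hbdd n i) ⟨ω, ⟨hω, hωN⟩, rfl⟩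
  have hεE : (0 : ENNReal) < ENNReal.ofReal ε := ENNReal.ofReal_pos.2 hε
  choose Mu hMu using fun i : Fin d => exists_tail_small P (X i) (hX i) hεE
  choose Ml hMl using fun i : Fin d => exists_tail_small_lower P (X i) (hX i) hεE
  have hq_mem : ∀ n, q n ∈ Set.pi Set.univ fun i => Icc (Ml i) (Mu i) := by
    intro n
    rw [Set.mem_univ_pi]
    intro i
    constructor
    · by_contra hcon
      push_neg at hcon
      have hsub : (B n)ᶜ \ NN n i ⊆ {ω | X i ω ≤ Ml i} := fun ω hω =>
        le_trans (hq_ge n i ω hω.1 hω.2) hcon.le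
      have h1 : P ((B n)ᶜ) ≤ P {ω | X i ω ≤ Ml i} := by
        rw [← measure_diff_null (hNN0 n i)]
        exact measure_mono hsub
      have h2 : ENNReal.ofReal ε ≤ P ((B n)ᶜ) := by
        rw [hPBc n, hPB n]
        calc ENNReal.ofReal ε = 1 - ENNReal.ofReal (1 - ε) := by
              rw [← ENNReal.ofReal_one,
                ← ENNReal.ofReal_sub 1 (show (0:ℝ) ≤ 1 - ε by linarith [hεp])]
              · congr 1
                ring
          _ ≤ 1 - ENNReal.ofReal (1 - rs n) := by
              have : ENNReal.ofReal (1 - rs n) ≤ ENNReal.ofReal (1 - ε) :=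
                ENNReal.ofReal_le_ofReal (by linarith [hrs_lb n])
              exact tsub_le_tsub_left this 1
      exact absurd ((h2.trans h1).trans_lt (hMl i)) (lt_irrefl _)
    · by_contra hcon
      push_neg at hcon
      have hsub : B n \ NN n i ⊆ {ω | Mu i ≤ X i ω} := fun ω hω =>
        le_trans hcon.le (hq_le n i ω hω.1 hω.2)
      have h1 : P (B n) ≤ P {ω | Mu i ≤ X i ω} := by
        rw [← measure_diff_null (hNN0 n i)]
        exact measure_mono hsub
      have h2 : ENNReal.ofReal ε ≤ P (B n) := by
        rw [hPB n]
        exact ENNReal.ofReal_le_ofReal (hrs_ub n)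
      exact absurd ((h2.trans h1).trans_lt (hMu i)) (lt_irrefl _)
  obtain ⟨L, -, φ, hφ, hqL⟩ :=
    (isCompact_univ_pi fun i : Fin d => isCompact_Icc).tendsto_subseq hq_mem
  have hqLi : ∀ i, Tendsto (fun n => q (φ n) i) atTop (𝓝 (L i)) := fun i =>
    tendsto_pi_nhds.1 hqL i
  have hrsφ : Tendsto (fun n => rs (φ n)) atTop (𝓝 p) := hrs.comp hφ.tendsto_atTop
  set Nb : Set Ω := ⋃ n, ⋃ i, NN n i with hNb_def
  have hNb0 : P Nb = 0 :=
    measure_iUnion_null fun n => measure_iUnion_null fun i => hNN0 n i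
  set Ns : Set Ω := toMeasurable P Nb with hNs_def
  have hNs0 : P Ns = 0 := by rw [hNs_def, measure_toMeasurable]; exact hNb0
  have hNs_meas : MeasurableSet Ns := measurableSet_toMeasurable P Nb
  have hNbNs : Nb ⊆ Ns := subset_toMeasurable P Nb
  have hmemNb : ∀ n i (ω : Ω), ω ∉ Nb → ω ∉ NN n i := fun n i ω hω h =>
    hω (mem_iUnion.2 ⟨n, mem_iUnion.2 ⟨i, h⟩⟩)
  set U : Set Ω := ⋃ i, {ω | L i < X i ω} with hU_def
  set V : Set Ω := ⋂ i, {ω | L i ≤ X i ω} with hV_def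
  have hUmeas : MeasurableSet U :=
    MeasurableSet.iUnion fun i => measurableSet_lt measurable_const (hX i)
  have hVmeas : MeasurableSet V :=
    MeasurableSet.iInter fun i => measurableSet_le measurable_const (hX i)
  set U' : Set Ω := U \ Ns with hU'_def
  have hU'meas : MeasurableSet U' := hUmeas.diff hNs_meas
  set Cl : ℕ → Set Ω := fun n => ⋂ m, ⋂ (_ : n ≤ m), B (φ m) with hCl_def
  have hCl_mono : Monotone Cl := fun n n' hnn' ω hω =>
    mem_iInter₂.2 fun m hm => mem_iInter₂.1 hω m (hnn'.trans hm)
  have hU'Cl : ∀ ω ∈ U', ∃ n, ω ∈ Cl n := by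
    rintro ω ⟨hωU, hωN⟩
    have hωNb : ω ∉ Nb := fun h => hωN (hNbNs h)
    obtain ⟨j, hj⟩ := mem_iUnion.1 hωU
    obtain ⟨n₁, hn₁⟩ := eventually_atTop.1 ((hqLi j).eventually_lt_const hj)
    refine ⟨n₁, mem_iInter₂.2 fun m hm => ?_⟩
    by_contra hωB
    exact absurd (hq_ge (φ m) j ω hωB (hmemNb _ _ _ hωNb)) (not_le.2 (hn₁ m hm))
  have hPLIM : P (⋃ n, Cl n) ≤ ENNReal.ofReal (1 - p) := by
    have ht1 : Tendsto (fun n => P (Cl n)) atTop (𝓝 (P (⋃ n, Cl n))) :=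
      tendsto_measure_iUnion_atTop hCl_mono
    have ht2 : Tendsto (fun n => ENNReal.ofReal (1 - rs (φ n))) atTop
        (𝓝 (ENNReal.ofReal (1 - p))) :=
      ENNReal.tendsto_ofReal (tendsto_const_nhds.sub hrsφ)
    refine le_of_tendsto_of_tendsto' ht1 ht2 fun n => ?_
    rw [← hPB (φ n)]
    exact measure_mono fun ω hω => mem_iInter₂.1 hω n le_rfl
  have hPU' : P U' ≤ ENNReal.ofReal (1 - p) :=
    le_trans (measure_mono fun ω hω => mem_iUnion.2 (hU'Cl ω hω)) hPLIM
  set Bu : ℕ → Set Ω := fun n => ⋃ m, ⋃ (_ : n ≤ m), B (φ m) with hBu_def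
  have hBu_anti : Antitone Bu := fun n n' hnn' ω hω => by
    obtain ⟨m, hm, hωm⟩ := mem_iUnion₂.1 hω
    exact mem_iUnion₂.2 ⟨m, hnn'.trans hm, hωm⟩
  have hBu_meas : ∀ n, MeasureTheory.NullMeasurableSet (Bu n) P := fun n =>
    (MeasurableSet.iUnion fun m => MeasurableSet.iUnion fun _ => hBmeas (φ m)).nullMeasurableSet
  have hPLS : ENNReal.ofReal (1 - p) ≤ P (⋂ n, Bu n) := by
    have ht1 : Tendsto (fun n => P (Bu n)) atTop (𝓝 (P (⋂ n, Bu n))) :=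
      tendsto_measure_iInter_atTop hBu_meas hBu_anti ⟨0, measure_ne_top P _⟩
    have ht2 : Tendsto (fun n => ENNReal.ofReal (1 - rs (φ n))) atTop
        (𝓝 (ENNReal.ofReal (1 - p))) :=
      ENNReal.tendsto_ofReal (tendsto_const_nhds.sub hrsφ)
    refine le_of_tendsto_of_tendsto' ht2 ht1 fun n => ?_
    rw [← hPB (φ n)]
    exact measure_mono fun ω hω => mem_iUnion₂.2 ⟨n, le_rfl, hω⟩
  have hLSV : ∀ ω ∈ ⋂ n, Bu n, ω ∉ Nb → ω ∈ V := by
    intro ω hωLS hωN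
    have hfreq : ∃ᶠ n in atTop, ω ∈ B (φ n) := frequently_atTop.2 fun n => by
      obtain ⟨m, hm, hωm⟩ := mem_iUnion₂.1 (mem_iInter.1 hωLS n)
      exact ⟨m, hm, hωm⟩
    obtain ⟨ψ, hψ, hψmem⟩ := extraction_of_frequently_atTop hfreq
    refine mem_iInter.2 fun i => ?_
    have htψ : Tendsto (fun n => q (φ (ψ n)) i) atTop (𝓝 (L i)) :=
      (hqLi i).comp hψ.tendsto_atTop
    exact le_of_tendsto htψ
      (Eventually.of_forall fun n => hq_le (φ (ψ n)) i ω (hψmem n) (hmemNb _ _ _ hωN))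
  have hPV : ENNReal.ofReal (1 - p) ≤ P V := by
    calc ENNReal.ofReal (1 - p) ≤ P (⋂ n, Bu n) := hPLS
      _ = P ((⋂ n, Bu n) \ Nb) := (measure_diff_null hNb0).symm
      _ ≤ P V := measure_mono fun ω hω => hLSV ω hω.1 hω.2
  set D : Set Ω := V \ (U ∪ Ns) with hD_def
  have hDmeas : MeasurableSet D := hVmeas.diff (hUmeas.union hNs_meas)
  have hdisj : Disjoint U' D := by
    refine Set.disjoint_left.2 ?_
    rintro ω ⟨hωU, -⟩ ⟨-, hωn⟩
    exact hωn (Or.inl hωU)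
  have hU'V : U' ⊆ V := by
    rintro ω ⟨hωU, hωN⟩
    have hωNb : ω ∉ Nb := fun h => hωN (hNbNs h)
    obtain ⟨n, hn⟩ := hU'Cl ω ⟨hωU, hωN⟩
    refine hLSV ω ?_ hωNb
    refine mem_iInter.2 fun n' => mem_iUnion₂.2 ⟨max n n', le_max_right _ _, ?_⟩
    exact mem_iInter₂.1 hn (max n n') (le_max_left _ _)
  have hcover : V \ Ns ⊆ U' ∪ D := by
    rintro ω ⟨hωV, hωN⟩
    by_cases hωU : ω ∈ U
    · exact Or.inl ⟨hωU, hωN⟩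
    · exact Or.inr ⟨hωV, fun h => h.elim hωU hωN⟩
  have hle : ENNReal.ofReal (1 - p) ≤ P D + P U' := by
    calc ENNReal.ofReal (1 - p) ≤ P V := hPV
      _ = P (V \ Ns) := (measure_diff_null hNs0).symm
      _ ≤ P (U' ∪ D) := measure_mono hcover
      _ ≤ P U' + P D := measure_union_le _ _
      _ = P D + P U' := add_comm _ _
  obtain ⟨E, hED, hEmeas, hPE⟩ :=
    hP D hDmeas (ENNReal.ofReal (1 - p) - P U') (tsub_le_iff_right.2 hle)
  refine ⟨U' ∪ E, fun i => ⟨⟨hU'meas.union hEmeas, Ns, hNs0, ?_⟩, ?_⟩⟩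
  · intro ω hω hωNs ω' hω' hω'Ns
    have hXω : L i ≤ X i ω := by
      rcases hω with hω | hω
      · exact mem_iInter.1 (hU'V hω) i
      · exact mem_iInter.1 (hED hω).1 i
    have hXω' : X i ω' ≤ L i := by
      have hω'U : ω' ∉ U := fun h => hω' (Or.inl ⟨h, hω'Ns⟩)
      by_contra hcon
      exact hω'U (mem_iUnion.2 ⟨i, not_le.1 hcon⟩)
    exact hXω'.trans hXω
  · rw [measure_union (hdisj.mono_right hED) hEmeas, hPE, add_tsub_cancel_of_le hPU']

end AuxProof

/-- For `K ⊆ [0,1]`, `K`-concentration is equivalent to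
`cl(K)`-concentration. -/
theorem stmt_1 {Ω : Type*} [MeasurableSpace Ω] (P : MeasureTheory.Measure Ω)
    [MeasureTheory.IsProbabilityMeasure P] (hP : Atomless P)
    (K : Set ℝ) (hK : K ⊆ Icc 0 1)
    {d : ℕ} (X : Fin d → Ω → ℝ) (hX : ∀ i, Measurable (X i)) :
    KConcentrated P X K ↔ KConcentrated P X (closure K) := by
  constructor
  · intro h pp hpp
    obtain ⟨ps, hmem, hlim⟩ := mem_closure_iff_seq_limit.1 hpp
    exact pconc_limit P hP X hX (closure_minimal hK isClosed_Icc hpp) ps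
      (fun n => h _ (hmem n)) hlim
  · intro h pp hpp
    exact h pp (subset_closure hpp)
end

section
/- Let K be a closed subset of [0,1]. (1) For every p ∈ (0,1], the functional X ↦ VaR_p(X) on L∞ is K-additive if and only if there exists a strictly increasing sequence (p_n)_{n∈ℕ} in K with p_n → p. (2) For every p ∈ [0,1), the functional X ↦ VaR⁺_p(X) on L∞ is K-additive if and only if there exists a strictly decreasing sequence (p_n)_{n∈ℕ} in K with p_n → p. -/
open MeasureTheory Filter Set

/-!
If `u n ↑ p` with `u n ∈ K`, then on a common `u n`-tail event every component lies below its
`u n`-quantile off the event and above it on the event, so the sum of these quantiles is a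
`u n`-quantile of the sum; letting `n → ∞`, left continuity of `p ↦ VaR_p` gives additivity of
`VaR_p`. Conversely, if `K` misses an interval `(α, p)`, take events `E₀, E₁` with
`ℙ(E₀ ∩ E₁) = 1 - p`, `ℙ(E₀ ∪ E₁) = 1 - α` and `ℙ(Eᵢ) = 1 - (α + p) / 2`: the indicators of `E₀`
and `E₁` are `K`-concentrated and each has `VaR_p = 1`, but their sum also has `VaR_p = 1`.
For `VaR⁺_p` the roles of the two sides of `p` are exchanged.
-/

open scoped ENNReal Topology

lemma StrictMono.lt_of_tendsto {α : Type*} [TopologicalSpace α] [Preorder α]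
    [OrderClosedTopology α] {u : ℕ → α} {a : α} (hu : StrictMono u)
    (hlim : Tendsto u atTop (𝓝 a)) (n : ℕ) : u n < a :=
  (hu n.lt_succ_self).trans_le (hu.monotone.ge_of_tendsto hlim _)

lemma StrictAnti.lt_of_tendsto {α : Type*} [TopologicalSpace α] [Preorder α]
    [OrderClosedTopology α] {u : ℕ → α} {a : α} (hu : StrictAnti u)
    (hlim : Tendsto u atTop (𝓝 a)) (n : ℕ) : a < u n :=
  (hu.antitone.le_of_tendsto hlim _).trans_lt (hu n.lt_succ_self)

def IsQuantile {Ω : Type*} [MeasurableSpace Ω] (P : Measure Ω) (X : Ω → ℝ) (q v : ℝ) : Prop :=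
  ENNReal.ofReal q ≤ P {ω | X ω ≤ v} ∧ P {ω | X ω < v} ≤ ENNReal.ofReal q

section Quantile

variable {Ω : Type*} [MeasurableSpace Ω] {P : Measure Ω} {X : Ω → ℝ}

lemma le_measure_le_of_forall_gt [IsFiniteMeasure P] (hX : Measurable X) {a : ℝ≥0∞} {v : ℝ}
    (h : ∀ x > v, a ≤ P {ω | X ω ≤ x}) : a ≤ P {ω | X ω ≤ v} := by
  have hlim := tendsto_measure_biInter_gt (μ := P) (s := fun x => {ω | X ω ≤ x}) (a := v)
    (fun x _ => (hX measurableSet_Iic).nullMeasurableSet)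
    (fun x y _ hxy ω hω => le_trans hω hxy) ⟨v + 1, by linarith, measure_ne_top _ _⟩
  have hinter : ⋂ x > v, {ω | X ω ≤ x} = {ω | X ω ≤ v} := by
    ext ω
    simp only [mem_iInter, mem_ofPred_eq]
    exact ⟨le_of_forall_gt_imp_ge_of_dense, fun hω x hx => hω.trans hx.le⟩
  rw [hinter] at hlim
  exact ge_of_tendsto hlim (eventually_nhdsWithin_of_forall h)

lemma measure_lt_le_of_forall_lt {a : ℝ≥0∞} {v : ℝ}
    (h : ∀ x < v, P {ω | X ω ≤ x} ≤ a) : P {ω | X ω < v} ≤ a := by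
  obtain ⟨u, hu, hu_lt, hlim⟩ := exists_seq_strictMono_tendsto v
  have hunion : ⋃ n, {ω | X ω ≤ u n} = {ω | X ω < v} := by
    show ⋃ n, X ⁻¹' Iic (u n) = X ⁻¹' Iio v
    rw [← preimage_iUnion, iUnion_Iic_eq_Iio_of_lt_of_tendsto hu_lt hlim]
  have hmeas := tendsto_measure_iUnion_atTop (μ := P) (s := fun n => {ω | X ω ≤ u n})
    (fun m n hmn ω (hω : X ω ≤ u m) => hω.trans (hu.monotone hmn))
  rw [hunion] at hmeas
  exact le_of_tendsto' hmeas fun n => h _ (hu_lt n)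

lemma MemLinf.bddBelow_measure_le_pos (hX : MemLinf P X) :
    BddBelow {x | 0 < P {ω | X ω ≤ x}} := by
  obtain ⟨-, C, hC⟩ := hX
  refine ⟨-C, fun x hx => not_lt.1 fun hxC => hx.ne' (measure_mono_null ?_ (ae_iff.1 hC))⟩
  intro ω (hω : X ω ≤ x)
  simp only [mem_ofPred_eq, not_le]
  linarith [neg_abs_le (X ω)]

lemma leftQuantile_le (hX : MemLinf P X) {p v : ℝ} (hp : 0 < p)
    (h : ENNReal.ofReal p ≤ P {ω | X ω ≤ v}) : leftQuantile P X p ≤ v :=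
  csInf_le (hX.bddBelow_measure_le_pos.mono fun _ hx => (ENNReal.ofReal_pos.2 hp).trans_le hx) h

lemma rightQuantile_le (hX : MemLinf P X) {p v : ℝ}
    (h : ENNReal.ofReal p < P {ω | X ω ≤ v}) : rightQuantile P X p ≤ v :=
  csInf_le (hX.bddBelow_measure_le_pos.mono fun _ hx =>
    lt_of_le_of_lt (zero_le (a := ENNReal.ofReal p)) hx) h

variable [IsProbabilityMeasure P]

lemma MemLinf.exists_measure_le_eq_one (hX : MemLinf P X) : ∃ C, P {ω | X ω ≤ C} = 1 := by
  obtain ⟨hXm, C, hC⟩ := hX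
  refine ⟨C, (prob_compl_eq_zero_iff (hXm measurableSet_Iic)).1
    (measure_mono_null (fun ω hω => ?_) (ae_iff.1 hC))⟩
  have hω' : C < X ω := not_le.1 hω
  exact not_le.2 (hω'.trans_le (le_abs_self _))

lemma prob_compl_eq_ofReal_one_sub {A : Set Ω} (hA : MeasurableSet A) {x : ℝ} (hx : 0 ≤ x)
    (h : P A = ENNReal.ofReal x) : P Aᶜ = ENNReal.ofReal (1 - x) := by
  rw [prob_compl_eq_one_sub hA, h, ENNReal.ofReal_sub _ hx, ENNReal.ofReal_one]

lemma le_leftQuantile (hX : MemLinf P X) {p v : ℝ} (hp : p ≤ 1)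
    (h : P {ω | X ω < v} < ENNReal.ofReal p) : v ≤ leftQuantile P X p := by
  obtain ⟨C, hC⟩ := hX.exists_measure_le_eq_one
  refine le_csInf ⟨C, by simp [hC, hp]⟩ fun x hx => not_lt.1 fun hxv => ?_
  exact (hx.trans (measure_mono fun ω (hω : X ω ≤ x) => hω.trans_lt hxv)).not_gt h

lemma le_rightQuantile (hX : MemLinf P X) {p v : ℝ} (hp : p < 1)
    (h : P {ω | X ω < v} ≤ ENNReal.ofReal p) : v ≤ rightQuantile P X p := by
  obtain ⟨C, hC⟩ := hX.exists_measure_le_eq_one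
  refine le_csInf ⟨C, by simp [hC, hp]⟩ fun x hx => not_lt.1 fun hxv => ?_
  exact ((measure_mono fun ω (hω : X ω ≤ x) => hω.trans_lt hxv).trans h).not_gt hx

lemma leftQuantile_eq (hX : MemLinf P X) {p v : ℝ} (hp : p ∈ Ioc 0 1)
    (hle : ENNReal.ofReal p ≤ P {ω | X ω ≤ v}) (hlt : P {ω | X ω < v} < ENNReal.ofReal p) :
    leftQuantile P X p = v :=
  (leftQuantile_le hX hp.1 hle).antisymm (le_leftQuantile hX hp.2 hlt)

lemma rightQuantile_eq (hX : MemLinf P X) {p v : ℝ} (hp : p < 1)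
    (hle : ENNReal.ofReal p < P {ω | X ω ≤ v}) (hlt : P {ω | X ω < v} ≤ ENNReal.ofReal p) :
    rightQuantile P X p = v :=
  (rightQuantile_le hX hle).antisymm (le_rightQuantile hX hp hlt)

lemma isQuantile_leftQuantile (hX : MemLinf P X) {q : ℝ} (hq : q ∈ Ioc 0 1) :
    IsQuantile P X q (leftQuantile P X q) := by
  obtain ⟨C, hC⟩ := hX.exists_measure_le_eq_one
  have hbdd : BddBelow {x | ENNReal.ofReal q ≤ P {ω | X ω ≤ x}} :=
    hX.bddBelow_measure_le_pos.mono fun _ hx => (ENNReal.ofReal_pos.2 hq.1).trans_le hx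
  refine ⟨le_measure_le_of_forall_gt hX.1 fun x hx => ?_,
    measure_lt_le_of_forall_lt fun x hx => ?_⟩
  · obtain ⟨y, hy, hyx⟩ := exists_lt_of_csInf_lt ⟨C, by simp [hC, hq.2]⟩ hx
    exact hy.trans (measure_mono fun ω (hω : X ω ≤ y) => hω.trans hyx.le)
  · have hx' := notMem_of_lt_csInf hx hbdd
    rw [mem_ofPred_eq, not_le] at hx'
    exact hx'.le

lemma isQuantile_rightQuantile (hX : MemLinf P X) {q : ℝ} (hq : q < 1) :
    IsQuantile P X q (rightQuantile P X q) := by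
  obtain ⟨C, hC⟩ := hX.exists_measure_le_eq_one
  have hbdd : BddBelow {x | ENNReal.ofReal q < P {ω | X ω ≤ x}} :=
    hX.bddBelow_measure_le_pos.mono fun _ hx => lt_of_le_of_lt (zero_le (a := ENNReal.ofReal q)) hx
  refine ⟨le_measure_le_of_forall_gt hX.1 fun x hx => ?_,
    measure_lt_le_of_forall_lt fun x hx => ?_⟩
  · obtain ⟨y, hy, hyx⟩ := exists_lt_of_csInf_lt ⟨C, by simp [hC, hq]⟩ hx
    exact hy.le.trans (measure_mono fun ω (hω : X ω ≤ y) => hω.trans hyx.le)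
  · have hx' := notMem_of_lt_csInf hx hbdd
    rwa [mem_ofPred_eq, not_lt] at hx'

lemma rightQuantile_le_leftQuantile (hX : MemLinf P X) {q p : ℝ} (hqp : q < p) (hp : p ∈ Ioc 0 1) :
    rightQuantile P X q ≤ leftQuantile P X p :=
  rightQuantile_le hX (((ENNReal.ofReal_lt_ofReal_iff hp.1).2 hqp).trans_le
    (isQuantile_leftQuantile hX hp).1)

lemma rightQuantile_le_rightQuantile (hX : MemLinf P X) {q p : ℝ} (hq : 0 ≤ q) (hqp : q < p)
    (hp : p < 1) :
    rightQuantile P X q ≤ rightQuantile P X p :=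
  rightQuantile_le hX (((ENNReal.ofReal_lt_ofReal_iff (hq.trans_lt hqp)).2 hqp).trans_le
    (isQuantile_rightQuantile hX hp).1)

lemma leftQuantile_le_leftQuantile (hX : MemLinf P X) {q p : ℝ} (hq : 0 < q) (hqp : q ≤ p)
    (hp : p ≤ 1) :
    leftQuantile P X q ≤ leftQuantile P X p :=
  leftQuantile_le hX hq ((ENNReal.ofReal_le_ofReal hqp).trans
    (isQuantile_leftQuantile hX ⟨hq.trans_le hqp, hp⟩).1)

lemma tendsto_rightQuantile_of_strictMono (hX : MemLinf P X) {p : ℝ} (hp : p ∈ Ioc 0 1)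
    {u : ℕ → ℝ} (hu : StrictMono u) (hu0 : ∀ n, 0 ≤ u n) (hlim : Tendsto u atTop (𝓝 p)) :
    Tendsto (fun n => rightQuantile P X (u n)) atTop (𝓝 (leftQuantile P X p)) := by
  have hup : ∀ n, u n < p := hu.lt_of_tendsto hlim
  have hu1 : ∀ n, u n < 1 := fun n => (hup n).trans_le hp.2
  have hle : ∀ n, rightQuantile P X (u n) ≤ leftQuantile P X p := fun n =>
    rightQuantile_le_leftQuantile hX (hup n) hp
  have hbdd : BddAbove (range fun n => rightQuantile P X (u n)) := ⟨_, forall_mem_range.2 hle⟩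
  have hmono : Monotone fun n => rightQuantile P X (u n) := monotone_nat_of_le_succ fun n =>
    rightQuantile_le_rightQuantile hX (hu0 n) (hu n.lt_succ_self) (hu1 _)
  have hsup : leftQuantile P X p ≤ ⨆ n, rightQuantile P X (u n) := by
    refine leftQuantile_le hX hp.1 (le_of_tendsto ((ENNReal.continuous_ofReal.tendsto p).comp hlim)
      (Eventually.of_forall fun n => ?_))
    exact (isQuantile_rightQuantile hX (hu1 n)).1.trans
      (measure_mono fun ω (hω : X ω ≤ _) => hω.trans (le_ciSup hbdd n))
  simpa only [(ciSup_le hle).antisymm hsup] using tendsto_atTop_ciSup hmono hbdd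

lemma tendsto_leftQuantile_of_strictAnti (hX : MemLinf P X) {p : ℝ} (hp : p ∈ Ico 0 1)
    {u : ℕ → ℝ} (hu : StrictAnti u) (hu1 : ∀ n, u n ≤ 1) (hlim : Tendsto u atTop (𝓝 p)) :
    Tendsto (fun n => leftQuantile P X (u n)) atTop (𝓝 (rightQuantile P X p)) := by
  have hpu : ∀ n, p < u n := hu.lt_of_tendsto hlim
  have hu0 : ∀ n, 0 < u n := fun n => hp.1.trans_lt (hpu n)
  have hge : ∀ n, rightQuantile P X p ≤ leftQuantile P X (u n) := fun n =>
    rightQuantile_le_leftQuantile hX (hpu n) ⟨hu0 n, hu1 n⟩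
  have hbdd : BddBelow (range fun n => leftQuantile P X (u n)) := ⟨_, forall_mem_range.2 hge⟩
  have hanti : Antitone fun n => leftQuantile P X (u n) := antitone_nat_of_succ_le fun n =>
    leftQuantile_le_leftQuantile hX (hu0 _) (hu n.lt_succ_self).le (hu1 n)
  have hinf : ⨅ n, leftQuantile P X (u n) ≤ rightQuantile P X p := by
    refine le_rightQuantile hX hp.2
      (ge_of_tendsto' ((ENNReal.continuous_ofReal.tendsto p).comp hlim) fun n => ?_)
    exact (measure_mono fun ω (hω : X ω < _) => hω.trans_le (ciInf_le hbdd n)).trans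
      (isQuantile_leftQuantile hX ⟨hu0 n, hu1 n⟩).2
  simpa only [hinf.antisymm (le_ciInf hge)] using tendsto_atTop_ciInf hanti hbdd

end Quantile

section TailEvent

variable {Ω : Type*} [MeasurableSpace Ω] {P : Measure Ω} {X : Ω → ℝ} {A : Set Ω}

lemma IsTailEvent.ae_le_of_measure_gt_le [IsFiniteMeasure P] (hA : IsTailEvent P X A) {v : ℝ}
    (h : P {ω | v < X ω} ≤ P A) : ∀ᵐ ω ∂P, ω ∈ Aᶜ → X ω ≤ v := by
  obtain ⟨hAm, N, hN, horder⟩ := hA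
  set E := Aᶜ ∩ {ω | v < X ω}
  suffices P E = 0 from
    ae_iff.2 <| measure_mono_null (fun ω hω => by push Not at hω; exact hω) this
  by_cases hE : (E \ N).Nonempty
  · obtain ⟨ω', ⟨hω'A, hω'v⟩, hω'N⟩ := hE
    -- a single point of `E` outside `N` forces `X > v` on all of `A \ N`
    have hsub : (A ∪ E) \ N ⊆ {ω | v < X ω} := by
      rintro ω ⟨hω | hω, hωN⟩
      · exact hω'v.trans_le (horder ω hω hωN ω' hω'A hω'N)
      · exact hω.2
    have hsum : P A + P E ≤ P A + 0 := calc
      P A + P E = P ((A ∪ E) \ N) := by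
        rw [measure_sdiff_null hN,
          measure_union' (disjoint_compl_right.mono_right inter_subset_left) hAm]
      _ ≤ P A + 0 := by rw [add_zero]; exact (measure_mono hsub).trans h
    exact nonpos_iff_eq_zero.1 (ENNReal.le_of_add_le_add_left (measure_ne_top _ _) hsum)
  · exact measure_mono_null (fun ω hω => by_contra fun hωN => hE ⟨ω, hω, hωN⟩) hN

lemma IsTailEvent.compl_neg (hA : IsTailEvent P X A) : IsTailEvent P (-X) Aᶜ := by
  obtain ⟨hAm, N, hN, horder⟩ := hA
  exact ⟨hAm.compl, N, hN, fun ω hω hωN ω' hω' hω'N =>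
    neg_le_neg (horder ω' (not_not.1 hω') hω'N ω hω hωN)⟩

lemma IsTailEvent.ae_ge_of_measure_lt_le [IsFiniteMeasure P] (hA : IsTailEvent P X A) {v : ℝ}
    (h : P {ω | X ω < v} ≤ P Aᶜ) : ∀ᵐ ω ∂P, ω ∈ A → v ≤ X ω := by
  filter_upwards [hA.compl_neg.ae_le_of_measure_gt_le (v := -v) (by simpa using h)] with ω hω hωA
  simpa using hω (not_not.2 hωA)

lemma MemLinf.sum {ι : Type*} [Fintype ι] {X : ι → Ω → ℝ} (hX : ∀ i, MemLinf P (X i)) :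
    MemLinf P (∑ i, X i) := by
  choose hXm C hC using hX
  refine ⟨by fun_prop, ∑ i, C i, ?_⟩
  filter_upwards [ae_all_iff.2 hC] with ω hω
  rw [Finset.sum_apply]
  exact (Finset.abs_sum_le_sum_abs _ _).trans (Finset.sum_le_sum fun i _ => hω i)

lemma PConcentrated.isQuantile_sum [IsProbabilityMeasure P] {d : ℕ} [NeZero d]
    {X : Fin d → Ω → ℝ} {q : ℝ} (hc : PConcentrated P X q) (hq : q ∈ Icc 0 1)
    (hX : ∀ i, Measurable (X i)) {v : Fin d → ℝ} (hv : ∀ i, IsQuantile P (X i) q (v i)) :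
    IsQuantile P (∑ i, X i) q (∑ i, v i) := by
  obtain ⟨A, hA⟩ := hc
  have hAm : MeasurableSet A := (hA 0).1.1
  have hAc : P Aᶜ = ENNReal.ofReal q := by
    rw [prob_compl_eq_ofReal_one_sub hAm (by linarith [hq.2]) (hA 0).2, sub_sub_cancel]
  have hupper : ∀ i, ∀ᵐ ω ∂P, ω ∈ Aᶜ → X i ω ≤ v i := fun i =>
    (hA i).1.ae_le_of_measure_gt_le <| calc
      P {ω | v i < X i ω} = P {ω | X i ω ≤ v i}ᶜ := by simp only [compl_ofPred, not_le]
      _ = 1 - P {ω | X i ω ≤ v i} := prob_compl_eq_one_sub ((hX i) measurableSet_Iic)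
      _ ≤ 1 - ENNReal.ofReal q := tsub_le_tsub_left (hv i).1 1
      _ = P A := by rw [(hA i).2, ENNReal.ofReal_sub _ hq.1, ENNReal.ofReal_one]
  have hlower : ∀ i, ∀ᵐ ω ∂P, ω ∈ A → v i ≤ X i ω := fun i =>
    (hA i).1.ae_ge_of_measure_lt_le ((hv i).2.trans hAc.ge)
  simp only [IsQuantile, Finset.sum_apply]
  constructor
  · rw [← hAc]
    refine measure_mono_ae ?_
    filter_upwards [ae_all_iff.2 hupper] with ω hω hωA
    exact Finset.sum_le_sum fun i _ => hω i hωA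
  · rw [← hAc]
    refine measure_mono_ae ?_
    filter_upwards [ae_all_iff.2 hlower] with ω hω hωS hωA
    exact (not_le.2 hωS) (Finset.sum_le_sum fun i _ => hω i hωA)

end TailEvent

section Sufficiency

variable {Ω : Type*} [MeasurableSpace Ω] {P : Measure Ω} [IsProbabilityMeasure P] {K : Set ℝ}

lemma kAdditive_leftQuantile_of_strictMono (hK : K ⊆ Icc 0 1) {p : ℝ} (hp : p ∈ Ioc 0 1)
    {u : ℕ → ℝ} (hu : StrictMono u) (huK : ∀ n, u n ∈ K) (hlim : Tendsto u atTop (𝓝 p)) :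
    KAdditive P K (fun X => leftQuantile P X p) := by
  intro d hd X hX hconc
  have : NeZero d := ⟨by omega⟩
  have hup : ∀ n, u n < p := hu.lt_of_tendsto hlim
  have hu1 : ∀ n, u n < 1 := fun n => (hup n).trans_le hp.2
  set c : ℕ → ℝ := fun n => ∑ i, rightQuantile P (X i) (u n)
  have hS : ∀ n, IsQuantile P (∑ i, X i) (u n) (c n) := fun n =>
    (hconc _ (huK n)).isQuantile_sum (hK (huK n)) (fun i => (hX i).1)
      fun i => isQuantile_rightQuantile (hX i) (hu1 n)
  have hc_le : ∀ n, c n ≤ ∑ i, leftQuantile P (X i) p := fun n =>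
    Finset.sum_le_sum fun i _ => rightQuantile_le_leftQuantile (hX i) (hup n) hp
  have hc_lim : Tendsto c atTop (𝓝 (∑ i, leftQuantile P (X i) p)) := tendsto_finsetSum _
    fun i _ => tendsto_rightQuantile_of_strictMono (hX i) hp hu (fun n => (hK (huK n)).1) hlim
  refine le_antisymm (leftQuantile_le (MemLinf.sum hX) hp.1 ?_)
    (le_of_tendsto' hc_lim fun n => le_leftQuantile (MemLinf.sum hX) hp.2 ?_)
  · refine le_of_tendsto' ((ENNReal.continuous_ofReal.tendsto p).comp hlim) fun n => ?_
    exact (hS n).1.trans (measure_mono fun ω (hω : _ ≤ c n) => hω.trans (hc_le n))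
  · exact (hS n).2.trans_lt ((ENNReal.ofReal_lt_ofReal_iff hp.1).2 (hup n))

lemma kAdditive_rightQuantile_of_strictAnti (hK : K ⊆ Icc 0 1) {p : ℝ} (hp : p ∈ Ico 0 1)
    {u : ℕ → ℝ} (hu : StrictAnti u) (huK : ∀ n, u n ∈ K) (hlim : Tendsto u atTop (𝓝 p)) :
    KAdditive P K (fun X => rightQuantile P X p) := by
  intro d hd X hX hconc
  have : NeZero d := ⟨by omega⟩
  have hpu : ∀ n, p < u n := hu.lt_of_tendsto hlim
  have hu0 : ∀ n, 0 < u n := fun n => hp.1.trans_lt (hpu n)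
  set c : ℕ → ℝ := fun n => ∑ i, leftQuantile P (X i) (u n)
  have hS : ∀ n, IsQuantile P (∑ i, X i) (u n) (c n) := fun n =>
    (hconc _ (huK n)).isQuantile_sum (hK (huK n)) (fun i => (hX i).1)
      fun i => isQuantile_leftQuantile (hX i) ⟨hu0 n, (hK (huK n)).2⟩
  have hc_ge : ∀ n, ∑ i, rightQuantile P (X i) p ≤ c n := fun n =>
    Finset.sum_le_sum fun i _ =>
      rightQuantile_le_leftQuantile (hX i) (hpu n) ⟨hu0 n, (hK (huK n)).2⟩
  have hc_lim : Tendsto c atTop (𝓝 (∑ i, rightQuantile P (X i) p)) := tendsto_finsetSum _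
    fun i _ => tendsto_leftQuantile_of_strictAnti (hX i) hp hu (fun n => (hK (huK n)).2) hlim
  refine le_antisymm (ge_of_tendsto' hc_lim fun n => rightQuantile_le (MemLinf.sum hX) ?_)
    (le_rightQuantile (MemLinf.sum hX) hp.2 ?_)
  · exact ((ENNReal.ofReal_lt_ofReal_iff (hu0 n)).2 (hpu n)).trans_le (hS n).1
  · refine ge_of_tendsto' ((ENNReal.continuous_ofReal.tendsto p).comp hlim) fun n => ?_
    exact (measure_mono fun ω (hω : _ < _) => hω.trans_le (hc_ge n)).trans (hS n).2

end Sufficiency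

lemma setOf_indicator_add_indicator_le_one {Ω : Type*} (E₀ E₁ : Set Ω) :
    {ω | (E₀.indicator 1 + E₁.indicator 1 : Ω → ℝ) ω ≤ 1} = (E₀ ∩ E₁)ᶜ := by
  ext ω
  by_cases h₀ : ω ∈ E₀ <;> by_cases h₁ : ω ∈ E₁ <;> simp [h₀, h₁]

lemma setOf_indicator_add_indicator_lt_one {Ω : Type*} (E₀ E₁ : Set Ω) :
    {ω | (E₀.indicator 1 + E₁.indicator 1 : Ω → ℝ) ω < 1} = (E₀ ∪ E₁)ᶜ := by
  ext ω
  by_cases h₀ : ω ∈ E₀ <;> by_cases h₁ : ω ∈ E₁ <;> simp [h₀, h₁]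

section Construction

variable {Ω : Type*} [MeasurableSpace Ω] {P : Measure Ω}

lemma memLinf_indicator_one {E : Set Ω} (hE : MeasurableSet E) : MemLinf P (E.indicator 1) :=
  ⟨measurable_one.indicator hE, 1, ae_of_all _ fun ω => by
    by_cases hω : ω ∈ E <;> simp [hω]⟩

lemma isTailEvent_indicator_one {A E : Set Ω} (hA : MeasurableSet A) (h : A ⊆ E ∨ E ⊆ A) :
    IsTailEvent P (E.indicator 1) A := by
  refine ⟨hA, ∅, measure_empty, fun ω hω _ ω' hω' _ => ?_⟩
  rcases h with hAE | hEA
  · rw [indicator_of_mem (hAE hω)]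
    exact indicator_apply_le' (fun _ => le_rfl) fun _ => zero_le_one
  · rw [indicator_of_notMem fun h => hω' (hEA h)]
    exact indicator_nonneg (fun _ _ => zero_le_one) _

variable [IsProbabilityMeasure P]

lemma kConcentrated_indicator_one (hP : Atomless P) {K : Set ℝ} (hK : K ⊆ Icc 0 1) {d : ℕ}
    {T U : Set Ω} {E : Fin d → Set Ω} (hT : MeasurableSet T) (hU : MeasurableSet U)
    (hTE : ∀ i, T ⊆ E i) (hEU : ∀ i, E i ⊆ U)
    (hKTU : ∀ q ∈ K, ENNReal.ofReal q ≤ P Uᶜ ∨ ENNReal.ofReal (1 - q) ≤ P T) :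
    KConcentrated P (fun i => (E i).indicator 1) K := by
  intro q hq
  rcases hKTU q hq with hqU | hqT
  · obtain ⟨C, hCU, hCm, hPC⟩ := hP _ hU.compl _ hqU
    exact ⟨Cᶜ, fun i => ⟨isTailEvent_indicator_one hCm.compl
      (Or.inr ((hEU i).trans (subset_compl_comm.1 hCU))),
      prob_compl_eq_ofReal_one_sub hCm (hK hq).1 hPC⟩⟩
  · obtain ⟨A, hAT, hAm, hPA⟩ := hP _ hT _ hqT
    exact ⟨A, fun i => ⟨isTailEvent_indicator_one hAm (Or.inl (hAT.trans (hTE i))), hPA⟩⟩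

lemma leftQuantile_indicator_one_eq_one {E : Set Ω} (hE : MeasurableSet E) {p : ℝ}
    (hp : p ∈ Ioc 0 1) (h : P Eᶜ < ENNReal.ofReal p) :
    leftQuantile P (E.indicator 1) p = 1 := by
  have hle : {ω | E.indicator (1 : Ω → ℝ) ω ≤ 1} = univ :=
    eq_univ_of_forall fun ω => by by_cases hω : ω ∈ E <;> simp [hω]
  have hlt : {ω | E.indicator (1 : Ω → ℝ) ω < 1} = Eᶜ := by
    ext ω; by_cases hω : ω ∈ E <;> simp [hω]
  refine leftQuantile_eq (memLinf_indicator_one hE) hp ?_ (by rwa [hlt])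
  rw [hle, measure_univ]
  exact ENNReal.ofReal_le_one.2 hp.2

lemma rightQuantile_indicator_one_eq_zero {E : Set Ω} (hE : MeasurableSet E) {p : ℝ} (hp : p < 1)
    (h : ENNReal.ofReal p < P Eᶜ) : rightQuantile P (E.indicator 1) p = 0 := by
  have hle : {ω | E.indicator (1 : Ω → ℝ) ω ≤ 0} = Eᶜ := by
    ext ω; by_cases hω : ω ∈ E <;> simp [hω]
  have hlt : {ω | E.indicator (1 : Ω → ℝ) ω < 0} = ∅ :=
    eq_empty_of_forall_notMem fun ω => by by_cases hω : ω ∈ E <;> simp [hω]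
  exact rightQuantile_eq (memLinf_indicator_one hE) hp (by rwa [hle]) (by simp [hlt])

lemma Atomless.exists_events_inter_union (hP : Atomless P) {α β : ℝ} (hα : 0 ≤ α) (hαβ : α < β)
    (hβ : β ≤ 1) :
    ∃ E₀ E₁ : Set Ω, MeasurableSet E₀ ∧ MeasurableSet E₁ ∧
      P (E₀ ∩ E₁) = ENNReal.ofReal (1 - β) ∧ P (E₀ ∪ E₁)ᶜ = ENNReal.ofReal α ∧
      P E₀ᶜ = ENNReal.ofReal ((α + β) / 2) ∧ P E₁ᶜ = ENNReal.ofReal ((α + β) / 2) := by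
  obtain ⟨U, -, hUm, hPU⟩ := hP univ .univ (ENNReal.ofReal (1 - α))
    (by rw [measure_univ]; exact ENNReal.ofReal_le_one.2 (by linarith))
  obtain ⟨T, hTU, hTm, hPT⟩ := hP U hUm (ENNReal.ofReal (1 - β))
    (hPU ▸ ENNReal.ofReal_le_ofReal (by linarith))
  have hPUT : P (U \ T) = ENNReal.ofReal (β - α) := by
    rw [measure_sdiff hTU hTm.nullMeasurableSet (measure_ne_top _ _), hPU, hPT,
      ← ENNReal.ofReal_sub _ (by linarith)]
    ring_nf
  obtain ⟨D, hDUT, hDm, hPD⟩ := hP (U \ T) (hUm.diff hTm) (ENNReal.ofReal ((β - α) / 2))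
    (hPUT ▸ ENNReal.ofReal_le_ofReal (by linarith))
  have hPE₀ : P (T ∪ D) = ENNReal.ofReal (1 - (α + β) / 2) := by
    rw [measure_union (disjoint_sdiff_right.mono_right hDUT) hDm, hPT, hPD,
      ← ENNReal.ofReal_add (by linarith) (by linarith)]
    ring_nf
  have hPE₁ : P (U \ D) = ENNReal.ofReal (1 - (α + β) / 2) := by
    rw [measure_sdiff (hDUT.trans sdiff_subset) hDm.nullMeasurableSet (measure_ne_top _ _), hPU,
      hPD, ← ENNReal.ofReal_sub _ (by linarith)]
    ring_nf
  have hinter : (T ∪ D) ∩ (U \ D) = T := by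
    ext ω; have := @hTU ω; have := @hDUT ω
    simp only [mem_inter_iff, mem_union, Set.mem_sdiff] at *; tauto
  have hunion : (T ∪ D) ∪ (U \ D) = U := by
    ext ω; have := @hTU ω; have := @hDUT ω
    simp only [mem_union, Set.mem_sdiff] at *; tauto
  refine ⟨T ∪ D, U \ D, hTm.union hDm, hUm.diff hDm, by rw [hinter, hPT], ?_, ?_, ?_⟩
  · rw [hunion, prob_compl_eq_ofReal_one_sub hUm (by linarith) hPU, sub_sub_cancel]
  · rw [prob_compl_eq_ofReal_one_sub (hTm.union hDm) (by linarith) hPE₀, sub_sub_cancel]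
  · rw [prob_compl_eq_ofReal_one_sub (hUm.diff hDm) (by linarith) hPE₁, sub_sub_cancel]

end Construction

section Necessity

variable {Ω : Type*} [MeasurableSpace Ω] {P : Measure Ω} [IsProbabilityMeasure P] {K : Set ℝ}

lemma exists_kConcentrated_pair (hP : Atomless P) (hK : K ⊆ Icc 0 1) {α β : ℝ} (hα : 0 ≤ α)
    (hαβ : α < β) (hβ : β ≤ 1) (hgap : Disjoint K (Ioo α β)) :
    ∃ X : Fin 2 → Ω → ℝ, (∀ i, MemLinf P (X i)) ∧ KConcentrated P X K ∧
      (∀ i, leftQuantile P (X i) β = 1 ∧ rightQuantile P (X i) α = 0) ∧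
      leftQuantile P (∑ i, X i) β = 1 ∧ rightQuantile P (∑ i, X i) α = 1 := by
  obtain ⟨E₀, E₁, hE₀, hE₁, hT, hU, hc₀, hc₁⟩ := hP.exists_events_inter_union hα hαβ hβ
  set E : Fin 2 → Set Ω := ![E₀, E₁]
  have hEm : ∀ i, MeasurableSet (E i) := Fin.forall_fin_two.2 ⟨hE₀, hE₁⟩
  have hTE : ∀ i, E₀ ∩ E₁ ⊆ E i := Fin.forall_fin_two.2 ⟨inter_subset_left, inter_subset_right⟩
  have hEU : ∀ i, E i ⊆ E₀ ∪ E₁ := Fin.forall_fin_two.2 ⟨subset_union_left, subset_union_right⟩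
  have hEc : ∀ i, P (E i)ᶜ ∈ Ioo (ENNReal.ofReal α) (ENNReal.ofReal β) := by
    have : ENNReal.ofReal ((α + β) / 2) ∈ Ioo (ENNReal.ofReal α) (ENNReal.ofReal β) :=
      ⟨(ENNReal.ofReal_lt_ofReal_iff (by linarith)).2 (by linarith),
        (ENNReal.ofReal_lt_ofReal_iff (by linarith)).2 (by linarith)⟩
    exact Fin.forall_fin_two.2 ⟨hc₀ ▸ this, hc₁ ▸ this⟩
  have hSum : ∑ i, (E i).indicator (1 : Ω → ℝ) = E₀.indicator 1 + E₁.indicator 1 := by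
    simp [E, Fin.sum_univ_two]
  have hTc : P (E₀ ∩ E₁)ᶜ = ENNReal.ofReal β := by
    rw [prob_compl_eq_ofReal_one_sub (hE₀.inter hE₁) (by linarith) hT, sub_sub_cancel]
  have hαβ' : ENNReal.ofReal α < ENNReal.ofReal β :=
    (ENNReal.ofReal_lt_ofReal_iff (by linarith)).2 hαβ
  have hSX : MemLinf P (∑ i, (E i).indicator (1 : Ω → ℝ)) :=
    MemLinf.sum fun i => memLinf_indicator_one (hEm i)
  refine ⟨fun i => (E i).indicator 1, fun i => memLinf_indicator_one (hEm i), ?_,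
    fun i => ⟨leftQuantile_indicator_one_eq_one (hEm i) ⟨by linarith, hβ⟩ (hEc i).2,
      rightQuantile_indicator_one_eq_zero (hEm i) (by linarith) (hEc i).1⟩, ?_, ?_⟩
  · refine kConcentrated_indicator_one hP hK (hE₀.inter hE₁) (hE₀.union hE₁) hTE hEU
      fun q hq => ?_
    rcases not_and_or.1 (hgap.notMem_of_mem_left hq) with hqα | hβq
    · exact Or.inl (hU ▸ ENNReal.ofReal_le_ofReal (not_lt.1 hqα))
    · exact Or.inr (hT ▸ ENNReal.ofReal_le_ofReal (by linarith [not_lt.1 hβq]))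
  · exact leftQuantile_eq hSX ⟨by linarith, hβ⟩
      (by rw [hSum, setOf_indicator_add_indicator_le_one, hTc])
      (by rw [hSum, setOf_indicator_add_indicator_lt_one, hU]; exact hαβ')
  · exact rightQuantile_eq hSX (by linarith)
      (by rw [hSum, setOf_indicator_add_indicator_le_one, hTc]; exact hαβ')
      (by rw [hSum, setOf_indicator_add_indicator_lt_one, hU])

lemma not_kAdditive_leftQuantile_of_disjoint (hP : Atomless P) (hK : K ⊆ Icc 0 1) {α p : ℝ}
    (hα : 0 ≤ α) (hαp : α < p) (hp : p ≤ 1) (hgap : Disjoint K (Ioo α p)) :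
    ¬ KAdditive P K (fun X => leftQuantile P X p) := by
  intro hadd
  obtain ⟨X, hX, hconc, hXq, hS, -⟩ := exists_kConcentrated_pair hP hK hα hαp hp hgap
  have h : leftQuantile P (∑ i, X i) p = ∑ i, leftQuantile P (X i) p := hadd 2 le_rfl X hX hconc
  rw [hS, Fin.sum_univ_two, (hXq 0).1, (hXq 1).1] at h
  norm_num at h

lemma not_kAdditive_rightQuantile_of_disjoint (hP : Atomless P) (hK : K ⊆ Icc 0 1) {p β : ℝ}
    (hp : 0 ≤ p) (hpβ : p < β) (hβ : β ≤ 1) (hgap : Disjoint K (Ioo p β)) :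
    ¬ KAdditive P K (fun X => rightQuantile P X p) := by
  intro hadd
  obtain ⟨X, hX, hconc, hXq, -, hS⟩ := exists_kConcentrated_pair hP hK hp hpβ hβ hgap
  have h : rightQuantile P (∑ i, X i) p = ∑ i, rightQuantile P (X i) p := hadd 2 le_rfl X hX hconc
  rw [hS, Fin.sum_univ_two, (hXq 0).2, (hXq 1).2] at h
  norm_num at h

end Necessity

lemma exists_strictMono_tendsto_or_disjoint (K : Set ℝ) {p : ℝ} (hp : 0 < p) :
    (∃ u : ℕ → ℝ, StrictMono u ∧ (∀ n, u n ∈ K) ∧ Tendsto u atTop (𝓝 p)) ∨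
      ∃ α, 0 ≤ α ∧ α < p ∧ Disjoint K (Ioo α p) := by
  by_cases h : ∀ α < p, (K ∩ Ioo α p).Nonempty
  · have hlub : IsLUB (K ∩ Iio p) p := ⟨fun x hx => hx.2.le, fun b hb => not_lt.1 fun hbp =>
      let ⟨x, hxK, hbx, hxp⟩ := h b hbp
      (hb ⟨hxK, hxp⟩).not_gt hbx⟩
    obtain ⟨x, hxK, -, hxp⟩ := h 0 hp
    obtain ⟨u, hu, -, hlim, huK⟩ :=
      hlub.exists_seq_strictMono_tendsto_of_notMem (fun h => lt_irrefl p h.2) ⟨x, hxK, hxp⟩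
    exact Or.inl ⟨u, hu, fun n => (huK n).1, hlim⟩
  · push Not at h
    obtain ⟨α, hαp, hα⟩ := h
    refine Or.inr ⟨max α 0, le_max_right _ _, max_lt hαp hp, ?_⟩
    exact (disjoint_iff_inter_eq_empty.2 hα).mono_right
      (Ioo_subset_Ioo_left (le_max_left _ _))

lemma exists_strictAnti_tendsto_or_disjoint (K : Set ℝ) {p : ℝ} (hp : p < 1) :
    (∃ u : ℕ → ℝ, StrictAnti u ∧ (∀ n, u n ∈ K) ∧ Tendsto u atTop (𝓝 p)) ∨
      ∃ β, p < β ∧ β ≤ 1 ∧ Disjoint K (Ioo p β) := by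
  by_cases h : ∀ β > p, (K ∩ Ioo p β).Nonempty
  · have hglb : IsGLB (K ∩ Ioi p) p := ⟨fun x hx => hx.2.le, fun b hb => not_lt.1 fun hpb =>
      let ⟨x, hxK, hpx, hxb⟩ := h b hpb
      (hb ⟨hxK, hpx⟩).not_gt hxb⟩
    obtain ⟨x, hxK, hpx, -⟩ := h 1 hp
    obtain ⟨u, hu, -, hlim, huK⟩ :=
      hglb.exists_seq_strictAnti_tendsto_of_notMem (fun h => lt_irrefl p h.2) ⟨x, hxK, hpx⟩
    exact Or.inl ⟨u, hu, fun n => (huK n).1, hlim⟩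
  · push Not at h
    obtain ⟨β, hpβ, hβ⟩ := h
    refine Or.inr ⟨min β 1, lt_min hpβ hp, min_le_right _ _, ?_⟩
    exact (disjoint_iff_inter_eq_empty.2 hβ).mono_right
      (Ioo_subset_Ioo_right (min_le_left _ _))

theorem stmt_2_general {Ω : Type*} [MeasurableSpace Ω] (P : MeasureTheory.Measure Ω)
    [MeasureTheory.IsProbabilityMeasure P] (hP : Atomless P)
    (K : Set ℝ) (hK : K ⊆ Icc 0 1) :
    (∀ p ∈ Ioc (0:ℝ) 1,
      (KAdditive P K (fun X => leftQuantile P X p) ↔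
        ∃ u : ℕ → ℝ, StrictMono u ∧ (∀ n, u n ∈ K) ∧
          Filter.Tendsto u Filter.atTop (nhds p))) ∧
    (∀ p ∈ Ico (0:ℝ) 1,
      (KAdditive P K (fun X => rightQuantile P X p) ↔
        ∃ u : ℕ → ℝ, StrictAnti u ∧ (∀ n, u n ∈ K) ∧
          Filter.Tendsto u Filter.atTop (nhds p))) := by
  refine ⟨fun p hp => ⟨fun hadd => ?_, fun ⟨u, hu, huK, hlim⟩ =>
      kAdditive_leftQuantile_of_strictMono hK hp hu huK hlim⟩,
    fun p hp => ⟨fun hadd => ?_, fun ⟨u, hu, huK, hlim⟩ =>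
      kAdditive_rightQuantile_of_strictAnti hK hp hu huK hlim⟩⟩
  · obtain hseq | ⟨α, hα, hαp, hgap⟩ := exists_strictMono_tendsto_or_disjoint K hp.1
    · exact hseq
    · exact absurd hadd (not_kAdditive_leftQuantile_of_disjoint hP hK hα hαp hp.2 hgap)
  · obtain hseq | ⟨β, hpβ, hβ, hgap⟩ := exists_strictAnti_tendsto_or_disjoint K hp.2
    · exact hseq
    · exact absurd hadd (not_kAdditive_rightQuantile_of_disjoint hP hK hp.1 hpβ hβ hgap)

/-- For closed `K ⊆ [0,1]`: (1) for `p ∈ (0,1]`, `VaR_p` is `K`-additive iff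
there is a strictly increasing sequence in `K` converging to `p`; (2) for `p ∈ [0,1)`,
`VaR⁺_p` is `K`-additive iff there is a strictly decreasing sequence in `K` converging
to `p`. -/
theorem stmt_2 {Ω : Type*} [MeasurableSpace Ω] (P : MeasureTheory.Measure Ω)
    [MeasureTheory.IsProbabilityMeasure P] (hP : Atomless P)
    (K : Set ℝ) (hKc : IsClosed K) (hK : K ⊆ Icc 0 1) :
    (∀ p ∈ Ioc (0:ℝ) 1,
      (KAdditive P K (fun X => leftQuantile P X p) ↔
        ∃ u : ℕ → ℝ, StrictMono u ∧ (∀ n, u n ∈ K) ∧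
          Filter.Tendsto u Filter.atTop (nhds p))) ∧
    (∀ p ∈ Ico (0:ℝ) 1,
      (KAdditive P K (fun X => rightQuantile P X p) ↔
        ∃ u : ℕ → ℝ, StrictAnti u ∧ (∀ n, u n ∈ K) ∧
          Filter.Tendsto u Filter.atTop (nhds p))) :=
  stmt_2_general P hP K hK
end

section
/- Fix d ∈ ℕ, a closed subset K of [0,1], and a random vector X = (X₁,…,X_d) of real random variables on Ω. Then X is K-concentrated if and only if for every k ∈ ℕ and every function f = (f₁,…,f_k) : ℝ^d → ℝ^k whose every component fᵢ : ℝ^d → ℝ is increasing with respect to the componentwise order on ℝ^d, the random vector f(X) = (f₁(X),…,f_k(X)) is K-concentrated. -/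
open MeasureTheory Filter Set

/-- `X` is `K`-concentrated iff every componentwise increasing transform
`f : ℝ^d → ℝ^k` of `X` is `K`-concentrated. -/
theorem stmt_3 {Ω : Type*} [MeasurableSpace Ω] (P : MeasureTheory.Measure Ω)
    [MeasureTheory.IsProbabilityMeasure P] (hP : Atomless P)
    (K : Set ℝ) (hKc : IsClosed K) (hK : K ⊆ Icc 0 1)
    {d : ℕ} (X : Fin d → Ω → ℝ) (hX : ∀ i, Measurable (X i)) :
    KConcentrated P X K ↔
      ∀ (k : ℕ) (f : Fin k → (Fin d → ℝ) → ℝ), (∀ i, Monotone (f i)) →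
        KConcentrated P (fun i ω => f i (fun j => X j ω)) K := by
  constructor
  · intro h k f hf p hp
    obtain ⟨A, hA⟩ := h p hp
    rcases Nat.eq_zero_or_pos d with hd | hd
    · subst hd
      have h1 : ENNReal.ofReal (1 - p) ≤ P Set.univ := by
        rw [measure_univ]
        calc ENNReal.ofReal (1 - p) ≤ ENNReal.ofReal 1 := by
              apply ENNReal.ofReal_le_ofReal; linarith [(hK hp).1]
          _ = 1 := ENNReal.ofReal_one
      obtain ⟨B, _, hBm, hBP⟩ := hP Set.univ MeasurableSet.univ _ h1
      refine ⟨B, fun i => ⟨⟨hBm, ∅, measure_empty, ?_⟩, hBP⟩⟩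
      intro ω _ _ ω' _ _
      exact hf i (fun j => j.elim0)
    · choose N hN0 hN using fun j => (hA j).1.2
      refine ⟨A, fun i => ⟨⟨(hA ⟨0, hd⟩).1.1, ⋃ j, N j, measure_iUnion_null hN0, ?_⟩,
        (hA ⟨0, hd⟩).2⟩⟩
      intro ω hω hωN ω' hω' hω'N
      exact hf i fun j => hN j ω hω (fun hc => hωN (Set.mem_iUnion.2 ⟨j, hc⟩))
        ω' hω' (fun hc => hω'N (Set.mem_iUnion.2 ⟨j, hc⟩))
  · intro h
    exact h d (fun i v => v i) (fun i a b hab => hab i)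
end

section
/- Let f, g ∈ 𝒢. The following are equivalent: (a) there exists an increasing function h : ℝ → ℝ with f = h ∘ g Lebesgue-almost everywhere on [0,1]; (b) there exists an increasing function h : ℝ → ℝ with f(0) = lim_{s↓0} (h∘g)(s) and f(p) = lim_{s↑p} (h∘g)(s) for every p ∈ (0,1]; (c) for all p, q ∈ [0,1] with p < q and g(p) = g(q), either f(p) = f(q), or p is a PSIL of g and g is constant on (p,q]; (d) there exists a set A ⊆ [0,1] of Lebesgue measure 1 such that for all p, q ∈ A, g(p) = g(q) implies f(p) = f(q). -/
open MeasureTheory Filter Set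

/-!
A full-measure subset `A` of `[0,1]` is dense. If `f` is constant on the fibres of `g` in `A`,
then `f = h ∘ g` on `A` for an increasing `h` (as `g` is increasing), and squeezing the increasing
function `h ∘ g` between values of `f` at nearby points of `A` shows that its one-sided limits are
those of `f`, i.e. `f` itself. Conversely, if `f` is the left-limit function of `h ∘ g`, then
`f < h ∘ g` only at jumps, and the jump intervals `(f p, h (g p))` are pairwise disjoint; likewise
the flat stretches `[p, q]` of `g` starting at a point of strict increase on the left are pairwise
disjoint. Disjoint open intervals of `ℝ` are countably many, so the exceptional sets are null.
On a flat stretch `[p, q]` of `g` with `p` not such a point, `g` is also flat just left of `p`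
(unless `p = 0`), so `h ∘ g` is constant near `p` and `q` on the sides where the limits defining
`f p` and `f q` are taken, whence `f p = f q`.
-/

open Topology

lemma Set.countable_of_Ioo_ordered {α β : Type*} [LinearOrder α] [LinearOrder β]
    [DenselyOrdered β] [TopologicalSpace β] [OrderTopology β] [TopologicalSpace.SeparableSpace β]
    {S : Set α} (u v : α → β) (huv : ∀ p ∈ S, u p < v p)
    (hle : ∀ p ∈ S, ∀ p' ∈ S, p < p' → v p ≤ u p') : S.Countable := by
  have hdisj : ∀ p ∈ S, ∀ p' ∈ S, p < p' → Disjoint (Ioo (u p) (v p)) (Ioo (u p') (v p')) :=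
    fun p hp p' hp' hlt => Set.disjoint_left.2 fun _ hx hx' =>
      (hx.2.trans_le (hle p hp p' hp' hlt)).not_gt hx'.1
  refine Set.PairwiseDisjoint.countable_of_isOpen (s := fun p => Ioo (u p) (v p))
    (fun p hp p' hp' hne => ?_) (fun _ _ => isOpen_Ioo) fun p hp => nonempty_Ioo.2 (huv p hp)
  rcases hne.lt_or_gt with hlt | hlt
  · exact hdisj p hp p' hp' hlt
  · exact (hdisj p' hp' p hp hlt).symm

lemma MeasureTheory.exists_subset_measure_eq_of_ae_restrict {α : Type*} [MeasurableSpace α]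
    {μ : Measure α} {s : Set α} (hs : MeasurableSet s) {P : α → Prop}
    (hP : ∀ᵐ t ∂μ.restrict s, P t) : ∃ A ⊆ s, μ A = μ s ∧ ∀ t ∈ A, P t := by
  have hnull : μ (s ∩ {t | ¬P t}) = 0 := by
    rw [inter_comm, ← Measure.restrict_apply' hs]
    exact ae_iff.1 hP
  exact ⟨s \ {t | ¬P t}, sdiff_subset, measure_sdiff_null' hnull, fun t ht => not_not.1 ht.2⟩

lemma inter_Ioo_nonempty_of_volume_eq_one {A : Set ℝ} (hA : A ⊆ Icc 0 1) (hA1 : volume A = 1)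
    {a b : ℝ} (ha : 0 ≤ a) (hb : b ≤ 1) (hab : a < b) : (A ∩ Ioo a b).Nonempty := by
  by_contra hempty
  have hsub : A ⊆ Icc 0 1 \ Ioo a b := fun t ht =>
    ⟨hA ht, fun hab' => hempty ⟨t, ht, hab'⟩⟩
  have hIoo : Ioo a b ⊆ Icc 0 1 := Ioo_subset_Icc_self.trans (Icc_subset_Icc ha hb)
  have hlt : volume (Icc (0:ℝ) 1 \ Ioo a b) < 1 := by
    rw [measure_sdiff hIoo measurableSet_Ioo.nullMeasurableSet measure_Ioo_lt_top.ne,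
      Real.volume_Icc, Real.volume_Ioo, sub_zero, ENNReal.ofReal_one]
    exact ENNReal.sub_lt_self ENNReal.one_ne_top one_ne_zero (by simpa using hab)
  exact (measure_mono hsub).not_gt (hA1 ▸ hlt)

lemma exists_monotone_eqOn_comp {α β γ : Type*} [LinearOrder α] [Nonempty α] [LinearOrder β]
    [ConditionallyCompleteLinearOrder γ] {f : α → γ} {g : α → β} {A : Set α}
    (hf : MonotoneOn f A) (hg : MonotoneOn g A) (hbot : BddBelow (f '' A))
    (htop : BddAbove (f '' A)) (hfib : ∀ p ∈ A, ∀ q ∈ A, g p = g q → f p = f q) :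
    ∃ h : β → γ, Monotone h ∧ EqOn f (h ∘ g) A := by
  classical
  set k : β → γ := fun y => f (Function.invFunOn g A y)
  have hk : EqOn f (k ∘ g) A := fun t ht =>
    hfib _ ht _ (Function.invFunOn_mem ⟨t, ht, rfl⟩) (Function.invFunOn_eq ⟨t, ht, rfl⟩).symm
  have hkA : k '' (g '' A) ⊆ f '' A := by
    rintro _ ⟨_, ⟨t, ht, rfl⟩, rfl⟩
    exact ⟨t, ht, hk ht⟩
  have hkmono : MonotoneOn k (g '' A) := by
    rintro _ ⟨p, hp, rfl⟩ _ ⟨q, hq, rfl⟩ hpq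
    have hfpq : f p ≤ f q := by
      rcases hpq.eq_or_lt with heq | hlt
      · exact (hfib p hp q hq heq).le
      · exact hf hp hq (hg.reflect_lt hp hq hlt).le
    exact (hk hp).symm.trans_le (hfpq.trans_eq (hk hq))
  obtain ⟨h, hh, hkh⟩ := hkmono.exists_monotone_extension (hbot.mono hkA) (htop.mono hkA)
  exact ⟨h, hh, fun t ht => (hk ht).trans (hkh ⟨t, ht, rfl⟩)⟩

section SqueezeOnDenseSet

variable {f φ : ℝ → ℝ} {A : Set ℝ}

lemma tendsto_nhdsLT_of_eqOn_dense (hf : MonotoneOn f (Icc 0 1))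
    (hφ : MonotoneOn φ (Icc 0 1)) (hA : A ⊆ Icc 0 1)
    (hdense : ∀ a b, 0 ≤ a → b ≤ 1 → a < b → (A ∩ Ioo a b).Nonempty) (heq : EqOn f φ A)
    {p : ℝ} (hp : p ∈ Ioc 0 1) (hfp : Tendsto f (𝓝[<] p) (𝓝 (f p))) :
    Tendsto φ (𝓝[<] p) (𝓝 (f p)) := by
  refine tendsto_order.2 ⟨fun l hl => ?_, fun u hu => ?_⟩
  · obtain ⟨c, hcp, hc⟩ := mem_nhdsLT_iff_exists_Ioo_subset.1 ((tendsto_order.1 hfp).1 l hl)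
    obtain ⟨t, htA, htc, htp⟩ := hdense (max c 0) p (le_max_right _ _) hp.2 (max_lt hcp hp.1)
    filter_upwards [Ioo_mem_nhdsLT htp] with s hs
    calc l < f t := hc ⟨(le_max_left _ _).trans_lt htc, htp⟩
      _ = φ t := heq htA
      _ ≤ φ s := hφ (hA htA) ⟨(hA htA).1.trans hs.1.le, hs.2.le.trans hp.2⟩ hs.1.le
  · filter_upwards [Ioo_mem_nhdsLT hp.1] with s hs
    obtain ⟨b, hbA, hsb, hbp⟩ := hdense s p hs.1.le hp.2 hs.2
    calc φ s ≤ φ b := hφ ⟨hs.1.le, hs.2.le.trans hp.2⟩ (hA hbA) hsb.le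
      _ = f b := (heq hbA).symm
      _ ≤ f p := hf (hA hbA) (Ioc_subset_Icc_self hp) hbp.le
      _ < u := hu

lemma tendsto_nhdsGT_zero_of_eqOn_dense (hf : MonotoneOn f (Icc 0 1))
    (hφ : MonotoneOn φ (Icc 0 1)) (hA : A ⊆ Icc 0 1)
    (hdense : ∀ a b, 0 ≤ a → b ≤ 1 → a < b → (A ∩ Ioo a b).Nonempty) (heq : EqOn f φ A)
    (hf0 : Tendsto f (𝓝[>] 0) (𝓝 (f 0))) : Tendsto φ (𝓝[>] 0) (𝓝 (f 0)) := by
  refine tendsto_order.2 ⟨fun l hl => ?_, fun u hu => ?_⟩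
  · filter_upwards [Ioo_mem_nhdsGT one_pos] with s hs
    obtain ⟨b, hbA, hb0, hbs⟩ := hdense 0 s le_rfl hs.2.le hs.1
    calc l < f 0 := hl
      _ ≤ f b := hf (left_mem_Icc.2 zero_le_one) (hA hbA) hb0.le
      _ = φ b := heq hbA
      _ ≤ φ s := hφ (hA hbA) ⟨hs.1.le, hs.2.le⟩ hbs.le
  · obtain ⟨c, hc0, hc⟩ := mem_nhdsGT_iff_exists_Ioo_subset.1 ((tendsto_order.1 hf0).2 u hu)
    obtain ⟨t, htA, ht0, htc⟩ :=
      hdense 0 (min c 1) le_rfl (min_le_right _ _) (lt_min hc0 one_pos)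
    filter_upwards [Ioo_mem_nhdsGT ht0] with s hs
    calc φ s ≤ φ t := hφ ⟨hs.1.le, hs.2.le.trans (hA htA).2⟩ (hA htA) hs.2.le
      _ = f t := (heq htA).symm
      _ < u := hc ⟨ht0, htc.trans_le (min_le_left _ _)⟩

end SqueezeOnDenseSet

lemma MonotoneOn.le_of_tendsto_nhdsLT {φ : ℝ → ℝ} {r p L : ℝ} (hφ : MonotoneOn φ (Icc r p))
    (hrp : r < p) (hL : Tendsto φ (𝓝[<] p) (𝓝 L)) : L ≤ φ p := by
  refine le_of_tendsto hL ?_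
  filter_upwards [Ioo_mem_nhdsLT hrp] with s hs
  exact hφ (Ioo_subset_Icc_self hs) (right_mem_Icc.2 hrp.le) hs.2.le

lemma MonotoneOn.ge_of_tendsto_nhdsLT {φ : ℝ → ℝ} {r p L : ℝ} (hφ : MonotoneOn φ (Icc r p))
    (hrp : r < p) (hL : Tendsto φ (𝓝[<] p) (𝓝 L)) : φ r ≤ L := by
  refine ge_of_tendsto hL ?_
  filter_upwards [Ioo_mem_nhdsLT hrp] with s hs
  exact hφ (left_mem_Icc.2 hrp.le) (Ioo_subset_Icc_self hs) hs.1.le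

lemma ae_eq_of_tendsto_nhdsLT {f φ : ℝ → ℝ} (hφ : MonotoneOn φ (Icc 0 1))
    (hL : ∀ p ∈ Ioc (0:ℝ) 1, Tendsto φ (𝓝[<] p) (𝓝 (f p))) :
    ∀ᵐ t ∂(volume.restrict (Icc (0:ℝ) 1)), f t = φ t := by
  set S := {p ∈ Ioc (0:ℝ) 1 | f p < φ p}
  have hS : S.Countable := Set.countable_of_Ioo_ordered f φ (fun p hp => hp.2)
    fun p hp p' hp' hlt => (hφ.mono (Icc_subset_Icc hp.1.1.le hp'.1.2)).ge_of_tendsto_nhdsLT hlt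
      (hL p' hp'.1)
  rw [ae_restrict_iff' measurableSet_Icc]
  filter_upwards [(hS.insert 0).ae_notMem volume] with t htS ht
  have ht0 : t ∈ Ioc (0:ℝ) 1 := ⟨ht.1.lt_of_ne (Ne.symm fun h => htS (Or.inl h)), ht.2⟩
  have hle : f t ≤ φ t :=
    (hφ.mono (Icc_subset_Icc_right ht.2)).le_of_tendsto_nhdsLT ht0.1 (hL t ht0)
  exact hle.eq_of_not_lt fun hlt => htS (Or.inr ⟨ht0, hlt⟩)

lemma MonotoneOn.eqOn_Icc_of_eq {α β : Type*} [Preorder α] [PartialOrder β] {g : α → β}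
    {s : Set α} (hg : MonotoneOn g s) (hs : s.OrdConnected) {p q : α} (hp : p ∈ s) (hq : q ∈ s)
    (hpq : g p = g q) : EqOn g (fun _ => g p) (Icc p q) := fun t ht =>
  have hts : t ∈ s := hs.out hp hq ht
  le_antisymm (hpq ▸ hg hts hq ht.2) (hg hp hts ht.1)

lemma exists_eq_of_not_isPSIL {g : ℝ → ℝ} (hg : MonotoneOn g (Icc 0 1)) {p : ℝ}
    (hp : p ∈ Ioc (0:ℝ) 1) (hpsil : ¬IsPSIL g p) : ∃ r ∈ Ico (0:ℝ) p, g r = g p := by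
  obtain ⟨r, hr, hgr⟩ : ∃ r ∈ Ico (0:ℝ) p, g p ≤ g r := by
    simpa [IsPSIL, hp, and_assoc] using hpsil
  exact ⟨r, hr, le_antisymm (hg ⟨hr.1, hr.2.le.trans hp.2⟩ (Ioc_subset_Icc_self hp) hr.2.le) hgr⟩

lemma eq_or_isPSIL_of_tendsto_comp {f g h : ℝ → ℝ} (hg : MonotoneOn g (Icc 0 1))
    (h0 : Tendsto (fun s => h (g s)) (𝓝[>] 0) (𝓝 (f 0)))
    (hL : ∀ p ∈ Ioc (0:ℝ) 1, Tendsto (fun s => h (g s)) (𝓝[<] p) (𝓝 (f p)))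
    {p q : ℝ} (hp : p ∈ Icc (0:ℝ) 1) (hq : q ∈ Icc (0:ℝ) 1) (hpq : p < q) (hgpq : g p = g q) :
    f p = f q ∨ (IsPSIL g p ∧ ∀ t ∈ Ioc p q, g t = g p) := by
  have hflat := hg.eqOn_Icc_of_eq ordConnected_Icc hp hq hgpq
  by_cases hpsil : IsPSIL g p
  · exact Or.inr ⟨hpsil, fun t ht => hflat (Ioc_subset_Icc_self ht)⟩
  have hq0 : 0 < q := hp.1.trans_lt hpq
  have hfq : f q = h (g p) :=
    tendsto_nhds_unique_of_eventuallyEq (hL q ⟨hq0, hq.2⟩) tendsto_const_nhds <| by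
      filter_upwards [Ioo_mem_nhdsLT hpq] with s hs
      exact congrArg h (hflat (Ioo_subset_Icc_self hs))
  have hfp : f p = h (g p) := by
    rcases hp.1.eq_or_lt with rfl | hp0
    · refine tendsto_nhds_unique_of_eventuallyEq h0 tendsto_const_nhds ?_
      filter_upwards [Ioo_mem_nhdsGT hq0] with s hs
      exact congrArg h (hflat (Ioo_subset_Icc_self hs))
    · obtain ⟨r, hr, hgr⟩ := exists_eq_of_not_isPSIL hg ⟨hp0, hp.2⟩ hpsil
      have hflat' := hg.eqOn_Icc_of_eq ordConnected_Icc ⟨hr.1, hr.2.le.trans hp.2⟩ hp hgr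
      refine tendsto_nhds_unique_of_eventuallyEq (hL p ⟨hp0, hp.2⟩) tendsto_const_nhds ?_
      filter_upwards [Ioo_mem_nhdsLT hr.2] with s hs
      exact congrArg h ((hflat' (Ioo_subset_Icc_self hs)).trans hgr)
  exact Or.inl (hfp.trans hfq.symm)

def flatPSIL (g : ℝ → ℝ) : Set ℝ :=
  {p | IsPSIL g p ∧ ∃ q ∈ Icc (0:ℝ) 1, p < q ∧ g q = g p}

lemma countable_flatPSIL {g : ℝ → ℝ} (hg : MonotoneOn g (Icc 0 1)) : (flatPSIL g).Countable := by
  have hex : ∀ p ∈ flatPSIL g, ∃ q ∈ Icc (0:ℝ) 1, p < q ∧ g q = g p := fun p hp => hp.2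
  choose! q hq hpq hgq using hex
  refine Set.countable_of_Ioo_ordered id q hpq fun p hp p' hp' hlt => ?_
  by_contra! hp'q
  have hp'01 : p' ∈ Icc (0:ℝ) 1 := Ioc_subset_Icc_self hp'.1.1
  have : g p' ≤ g p := hgq p hp ▸ hg hp'01 (hq p hp) hp'q.le
  exact this.not_gt (hp'.1.2 p ⟨hp.1.1.1.le, hlt⟩)

lemma eq_of_notMem_flatPSIL {f g : ℝ → ℝ}
    (h3 : ∀ p ∈ Icc (0:ℝ) 1, ∀ q ∈ Icc (0:ℝ) 1, p < q → g p = g q →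
      f p = f q ∨ (IsPSIL g p ∧ ∀ t ∈ Ioc p q, g t = g p))
    {p q : ℝ} (hp : p ∈ Icc (0:ℝ) 1) (hq : q ∈ Icc (0:ℝ) 1) (hpN : p ∉ flatPSIL g)
    (hqN : q ∉ flatPSIL g) (hgpq : g p = g q) : f p = f q := by
  rcases lt_trichotomy p q with hlt | rfl | hlt
  · exact (h3 p hp q hq hlt hgpq).resolve_right fun h => hpN ⟨h.1, q, hq, hlt, hgpq.symm⟩
  · rfl
  · exact ((h3 q hq p hp hlt hgpq.symm).resolve_right fun h => hqN ⟨h.1, p, hp, hlt, hgpq⟩).symm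

/-- For `f, g ∈ 𝒢`, the four characterizations of `f ≾ g` are
equivalent. -/
theorem stmt_5 (f g : ℝ → ℝ) (hf : MemG f) (hg : MemG g) :
    List.TFAE [
      (∃ h : ℝ → ℝ, Monotone h ∧
        ∀ᵐ t ∂(MeasureTheory.volume.restrict (Icc (0:ℝ) 1)), f t = h (g t)),
      (∃ h : ℝ → ℝ, Monotone h ∧
        Filter.Tendsto (fun s => h (g s)) (nhdsWithin 0 (Ioi 0)) (nhds (f 0)) ∧
        ∀ p ∈ Ioc (0:ℝ) 1,
          Filter.Tendsto (fun s => h (g s)) (nhdsWithin p (Iio p)) (nhds (f p))),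
      (∀ p ∈ Icc (0:ℝ) 1, ∀ q ∈ Icc (0:ℝ) 1, p < q → g p = g q →
        f p = f q ∨ (IsPSIL g p ∧ ∀ t ∈ Ioc p q, g t = g p)),
      (∃ A : Set ℝ, A ⊆ Icc (0:ℝ) 1 ∧ MeasureTheory.volume A = 1 ∧
        ∀ p ∈ A, ∀ q ∈ A, g p = g q → f p = f q)
    ] := by
  obtain ⟨hfm, hf0, hfL⟩ := hf
  have hgm := hg.1
  tfae_have 1 → 4 := fun ⟨h, _, hae⟩ => by
    obtain ⟨A, hA, hA1, hfA⟩ := exists_subset_measure_eq_of_ae_restrict measurableSet_Icc hae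
    exact ⟨A, hA, by simpa using hA1, fun p hp q hq hpq => by rw [hfA p hp, hfA q hq, hpq]⟩
  tfae_have 4 → 2 := fun ⟨A, hA, hA1, hfib⟩ => by
    have hdense := fun a b => inter_Ioo_nonempty_of_volume_eq_one (a := a) (b := b) hA hA1
    have hsup : (upperBounds A ∩ Icc 0 1).Nonempty := ⟨1, fun t ht => (hA ht).2, by simp⟩
    have hinf : (lowerBounds A ∩ Icc 0 1).Nonempty := ⟨0, fun t ht => (hA ht).1, by simp⟩
    obtain ⟨h, hh, hfh⟩ := exists_monotone_eqOn_comp (hfm.mono hA) (hgm.mono hA)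
      (hfm.map_bddBelow hA hinf) (hfm.map_bddAbove hA hsup) hfib
    have hφ := hh.comp_monotoneOn hgm
    exact ⟨h, hh, tendsto_nhdsGT_zero_of_eqOn_dense hfm hφ hA hdense hfh hf0,
      fun p hp => tendsto_nhdsLT_of_eqOn_dense hfm hφ hA hdense hfh hp (hfL p hp)⟩
  tfae_have 2 → 3 := fun ⟨_, _, h0, hL⟩ _ hp _ hq => eq_or_isPSIL_of_tendsto_comp hgm h0 hL hp hq
  tfae_have 3 → 4 := fun h3 => by
    obtain ⟨A, hA, hA1, hAN⟩ := exists_subset_measure_eq_of_ae_restrict measurableSet_Icc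
      (ae_restrict_of_ae ((countable_flatPSIL hgm).ae_notMem volume))
    exact ⟨A, hA, by simpa using hA1, fun p hp q hq =>
      eq_of_notMem_flatPSIL h3 (hA hp) (hA hq) (hAN p hp) (hAN q hq)⟩
  tfae_have 2 → 1 := fun ⟨h, hh, _, hL⟩ =>
    ⟨h, hh, ae_eq_of_tendsto_nhdsLT (hh.comp_monotoneOn hgm) hL⟩
  tfae_finish
end

section
/- Let f, g ∈ 𝒢. Then f ≾ g if and only if every g-comonotonic random vector of real random variables on Ω is f-comonotonic. -/
open MeasureTheory Filter Set

/-!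
If `f = h ∘ g` a.e. with `h` increasing and `Z` has quantile function `g`, then `h ∘ Z` is
comonotonic with everything `Z` is comonotonic with, and its quantile function is `f`.

Conversely, the atomless space carries a standard uniform `U`. If `g` is constant on `[s, t]`
and `σ` reflects `(s, t)`, the vector `(U, σ ∘ U)` is `g`-comonotonic through `g ∘ U`. An
`f`-comonotonic witness `Z` is comonotonic with `U` and has quantile function `f`, which forces
`Z = f ∘ U` a.s.; comonotonicity of `f ∘ U` with `σ ∘ U` then forces `f` to be constant on
`(s, t]`. Finally, if `f` is constant on `(s, t]` whenever `g` is constant on `[s, t]`, then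
`f = h ∘ g` for `h y = sup {f u | g u ≤ y}` at every point of continuity of `f`.
-/

open Topology ProbabilityTheory

namespace ComonotonePair

variable {Ω : Type*} [MeasurableSpace Ω] {P : Measure Ω} {X Z : Ω → ℝ}

theorem comp_monotone (h : ComonotonePair P X Z) {φ : ℝ → ℝ} (hφ : Monotone φ) :
    ComonotonePair P X (fun ω => φ (Z ω)) := by
  filter_upwards [h] with w hw
  rcases lt_trichotomy (Z w.1) (Z w.2) with hlt | heq | hgt
  · exact mul_nonneg_of_nonpos_of_nonpos (nonpos_of_mul_nonneg_left hw (sub_neg.2 hlt))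
      (sub_nonpos.2 (hφ hlt.le))
  · simp [heq]
  · exact mul_nonneg (nonneg_of_mul_nonneg_left hw (sub_pos.2 hgt)) (sub_nonneg.2 (hφ hgt.le))

theorem neg (h : ComonotonePair P X Z) : ComonotonePair P (-X) (-Z) := by
  filter_upwards [h] with w hw
  convert hw using 1
  simp only [Pi.neg_apply]
  ring

theorem congr_right (h : ComonotonePair P X Z) {Z' : Ω → ℝ} (hZ : Z =ᵐ[P] Z') :
    ComonotonePair P X Z' := by
  filter_upwards [h, Measure.quasiMeasurePreserving_fst.ae_eq hZ,
    Measure.quasiMeasurePreserving_snd.ae_eq hZ] with w hw h₁ h₂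
  simp only [Function.comp_apply] at h₁ h₂
  rwa [← h₁, ← h₂]

theorem measure_eq_zero_or [SFinite P] (h : ComonotonePair P X Z) {B C : Set Ω}
    (hBC : ∀ ω ∈ B, ∀ ω' ∈ C, (X ω - X ω') * (Z ω - Z ω') < 0) : P B = 0 ∨ P C = 0 := by
  have : (P.prod P) (B ×ˢ C) = 0 :=
    measure_mono_null (fun w hw => not_le.2 (hBC _ hw.1 _ hw.2)) (ae_iff.1 h)
  rwa [Measure.prod_prod, mul_eq_zero] at this

theorem ae_le_of_measure_lt [SFinite P] (h : ComonotonePair P X Z) {a c : ℝ}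
    (hlt : P {ω | X ω < a} < P {ω | Z ω ≤ c}) : ∀ᵐ ω ∂P, X ω < a → Z ω ≤ c := by
  have hC : P ({ω | a ≤ X ω} ∩ {ω | Z ω ≤ c}) ≠ 0 := by
    intro h0
    refine hlt.not_ge ?_
    calc P {ω | Z ω ≤ c} ≤ P ({ω | a ≤ X ω} ∩ {ω | Z ω ≤ c} ∪ {ω | X ω < a}) :=
          measure_mono fun ω hω => (le_or_gt a (X ω)).imp (fun ha => ⟨ha, hω⟩) id
      _ ≤ P {ω | X ω < a} := (measure_union_le _ _).trans_eq (by rw [h0, zero_add])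
  refine (h.measure_eq_zero_or (B := {ω | X ω < a} ∩ {ω | c < Z ω}) ?_).elim
    (fun hB => ?_) (absurd · hC)
  · rintro ω ⟨hω₁ : X ω < a, hω₂ : c < Z ω⟩ ω' ⟨hω'₁ : a ≤ X ω', hω'₂ : Z ω' ≤ c⟩
    exact mul_neg_of_neg_of_pos (by linarith) (by linarith)
  · filter_upwards [measure_eq_zero_iff_ae_notMem.1 hB] with ω hω hX
    exact not_lt.1 fun hZ => hω ⟨hX, hZ⟩

theorem ae_ge_of_measure_lt [SFinite P] (h : ComonotonePair P X Z) {a c : ℝ}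
    (hlt : P {ω | a < X ω} < P {ω | c ≤ Z ω}) : ∀ᵐ ω ∂P, a < X ω → c ≤ Z ω := by
  filter_upwards [h.neg.ae_le_of_measure_lt (a := -a) (c := -c) (by simpa using hlt)]
    with ω hω hX
  simpa using hω (by simpa using hX)

end ComonotonePair

theorem comonotonePair_comp_self {Ω : Type*} [MeasurableSpace Ω] {P : Measure Ω} {V : Ω → ℝ}
    {S : Set ℝ} {g : ℝ → ℝ} (hg : MonotoneOn g S) (hV : ∀ ω, V ω ∈ S) :
    ComonotonePair P V (fun ω => g (V ω)) := by
  refine ae_of_all _ fun w => ?_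
  rcases le_total (V w.1) (V w.2) with h | h
  · exact mul_nonneg_of_nonpos_of_nonpos (sub_nonpos.2 h) (sub_nonpos.2 (hg (hV _) (hV _) h))
  · exact mul_nonneg (sub_nonneg.2 h) (sub_nonneg.2 (hg (hV _) (hV _) h))

section Quantile

variable {Ω : Type*} [MeasurableSpace Ω] {P : Measure Ω} {Z : Ω → ℝ}

theorem Q_eq_of_isLeast {φ : ℝ → ℝ} (hφ : MonotoneOn φ (Icc 0 1))
    (hφ0 : Tendsto φ (𝓝[>] 0) (𝓝 (φ 0)))
    (h : ∀ p ∈ Ioc (0:ℝ) 1, IsLeast {x | ENNReal.ofReal p ≤ P {ω | Z ω ≤ x}} (φ p)) :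
    ∀ p ∈ Icc (0:ℝ) 1, Q P Z p = φ p := by
  rintro p ⟨hp0, hp1⟩
  rcases hp0.eq_or_lt with rfl | hp0
  · set T := {x | ENNReal.ofReal 0 < P {ω | Z ω ≤ x}}
    have hmem : ∀ p ∈ Ioc (0:ℝ) 1, φ p ∈ T := fun p hp =>
      (ENNReal.ofReal_lt_ofReal_iff hp.1).2 hp.1 |>.trans_le (h p hp).1
    have hlb : φ 0 ∈ lowerBounds T := by
      intro x hx
      obtain ⟨r, -, hr, hrx⟩ := ENNReal.lt_iff_exists_real_btwn.1 hx
      have hr : min r 1 ∈ Ioc (0:ℝ) 1 :=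
        ⟨lt_min (by simpa using hr) one_pos, min_le_right _ _⟩
      calc φ 0 ≤ φ (min r 1) := hφ ⟨le_rfl, zero_le_one⟩ (Ioc_subset_Icc_self hr) hr.1.le
        _ ≤ x := (h _ hr).2 ((ENNReal.ofReal_le_ofReal (min_le_left _ _)).trans hrx.le)
    rw [Q, if_pos rfl, rightQuantile]
    refine le_antisymm (ge_of_tendsto hφ0 ?_) (le_csInf ⟨_, hmem 1 ⟨one_pos, le_rfl⟩⟩ hlb)
    filter_upwards [Ioc_mem_nhdsGT one_pos] with p hp using csInf_le ⟨_, hlb⟩ (hmem p hp)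
  · rw [Q, if_neg hp0.ne', leftQuantile]
    exact (h p ⟨hp0, hp1⟩).csInf_eq

theorem measure_lt_le_of_forall_lt_s6 {c : ℝ} {e : ENNReal} (h : ∀ x < c, P {ω | Z ω ≤ x} ≤ e) :
    P {ω | Z ω < c} ≤ e := by
  obtain ⟨u, hu_mono, hu_lt, hu_lim⟩ := exists_seq_strictMono_tendsto c
  have hunion : {ω | Z ω < c} = ⋃ n, {ω | Z ω ≤ u n} := by
    simp_rw [← mem_Iio, ← iUnion_Iic_eq_Iio_of_lt_of_tendsto hu_lt hu_lim, mem_iUnion, mem_Iic,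
      ofPred_exists]
  rw [hunion, Monotone.measure_iUnion (s := fun n => {ω | Z ω ≤ u n})
    fun m n hmn ω hω => le_trans hω (hu_mono.monotone hmn)]
  exact iSup_le fun n => h _ (hu_lt n)

theorem leftQuantile_eq_of_Q_eq {g : ℝ → ℝ} (hQ : ∀ p ∈ Icc (0:ℝ) 1, Q P Z p = g p) {q : ℝ}
    (hq : q ∈ Ioo (0:ℝ) 1) : leftQuantile P Z q = g q := by
  rw [← hQ q (Ioo_subset_Icc_self hq), Q, if_neg hq.1.ne']

variable [IsProbabilityMeasure P]

theorem measure_le_eq_ofReal_cdf (hZ : Measurable Z) (x : ℝ) :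
    P {ω | Z ω ≤ x} = ENNReal.ofReal (cdf (P.map Z) x) := by
  have := Measure.isProbabilityMeasure_map (μ := P) hZ.aemeasurable
  rw [ofReal_cdf, Measure.map_apply hZ measurableSet_Iic]
  rfl

theorem leftQuantile_eq_sInf_cdf (hZ : Measurable Z) (q : ℝ) :
    leftQuantile P Z q = sInf {x | q ≤ cdf (P.map Z) x} := by
  simp_rw [leftQuantile, measure_le_eq_ofReal_cdf hZ, ENNReal.ofReal_le_ofReal_iff (cdf_nonneg _ _)]

theorem bddBelow_le_cdf {q : ℝ} (hq : 0 < q) (μ : Measure ℝ) :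
    BddBelow {x | q ≤ cdf μ x} := by
  obtain ⟨x₀, hx₀⟩ := ((tendsto_cdf_atBot μ).eventually (gt_mem_nhds hq)).exists_forall_of_atBot
  exact ⟨x₀, fun x hx => le_of_not_ge fun hle => (hx₀ x hle).not_ge hx⟩

theorem ofReal_le_measure_le_leftQuantile (hZ : Measurable Z) {q : ℝ} (hq : q ∈ Ioo (0:ℝ) 1) :
    ENNReal.ofReal q ≤ P {ω | Z ω ≤ leftQuantile P Z q} := by
  set F := cdf (P.map Z)
  rw [measure_le_eq_ofReal_cdf hZ, ENNReal.ofReal_le_ofReal_iff (cdf_nonneg _ _),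
    leftQuantile_eq_sInf_cdf hZ]
  have hne : {x | q ≤ F x}.Nonempty :=
    ((tendsto_cdf_atTop _).eventually (lt_mem_nhds hq.2)).exists.imp fun _ => le_of_lt
  refine ge_of_tendsto ((F.right_continuous _).mono Ioi_subset_Ici_self) ?_
  filter_upwards [self_mem_nhdsWithin] with x hx
  obtain ⟨y, hy, hyx⟩ := exists_lt_of_csInf_lt hne hx
  exact hy.trans (F.mono hyx.le)

theorem measure_lt_leftQuantile_le (hZ : Measurable Z) {q : ℝ} (hq : 0 < q) :
    P {ω | Z ω < leftQuantile P Z q} ≤ ENNReal.ofReal q := by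
  refine measure_lt_le_of_forall_lt_s6 fun x hx => ?_
  rw [leftQuantile_eq_sInf_cdf hZ] at hx
  have := notMem_of_lt_csInf hx (bddBelow_le_cdf hq _)
  rw [measure_le_eq_ofReal_cdf hZ]
  exact ENNReal.ofReal_le_ofReal (le_of_lt (not_le.1 this))

end Quantile

theorem exists_mem_Ioo_of_ae_restrict_Icc {p : ℝ → Prop}
    (h : ∀ᵐ t ∂volume.restrict (Icc (0:ℝ) 1), p t) {a b : ℝ} (ha : 0 ≤ a) (hab : a < b)
    (hb : b ≤ 1) : ∃ q ∈ Ioo a b, p q := by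
  by_contra! hcon
  rw [ae_iff, Measure.restrict_apply' measurableSet_Icc] at h
  have hsub : Ioo a b ⊆ {t | ¬p t} ∩ Icc 0 1 := fun t ht =>
    ⟨hcon t ht, Ioo_subset_Icc_self.trans (Icc_subset_Icc ha hb) ht⟩
  have : volume (Ioo a b) = 0 := measure_mono_null hsub h
  simp only [Real.volume_Ioo, ENNReal.ofReal_eq_zero, tsub_nonpos] at this
  exact this.not_gt hab

theorem ae_restrict_Icc_continuousAt {f : ℝ → ℝ} (hf : MonotoneOn f (Icc 0 1)) :
    ∀ᵐ t ∂volume.restrict (Icc (0:ℝ) 1), t ∈ Ioo (0:ℝ) 1 ∧ ContinuousAt f t := by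
  have hD := hf.countable_not_continuousWithinAt.union ((countable_singleton (1:ℝ)).insert 0)
  filter_upwards [ae_restrict_mem measurableSet_Icc, ae_restrict_of_ae (hD.ae_notMem volume)]
    with t ht htD
  have hI : t ∈ Ioo (0:ℝ) 1 := ⟨ht.1.lt_of_ne' fun h => htD (Or.inr (Or.inl h)),
    ht.2.lt_of_ne fun h => htD (Or.inr (Or.inr h))⟩
  exact ⟨hI, (continuousWithinAt_iff_continuousAt (Icc_mem_nhds hI.1 hI.2)).1
    (not_not.1 fun hc => htD (Or.inl ⟨ht, hc⟩))⟩

theorem MonotoneOn.exists_monotone_eqOn_Icc {g : ℝ → ℝ} {a b : ℝ} (hab : a ≤ b)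
    (hg : MonotoneOn g (Icc a b)) : ∃ g' : ℝ → ℝ, Monotone g' ∧ EqOn g g' (Icc a b) :=
  hg.exists_monotone_extension
    ⟨g a, hg.mem_lowerBounds_image subset_rfl (fun _ h => h.1) (left_mem_Icc.2 hab)⟩
    ⟨g b, hg.mem_upperBounds_image subset_rfl (fun _ h => h.2) (right_mem_Icc.2 hab)⟩

theorem ENNReal.ofReal_le_of_forall_exists {p : ℝ} {m : ENNReal}
    (h : ∀ a < p, ∃ q ∈ Ioo a p, ENNReal.ofReal q ≤ m) : ENNReal.ofReal p ≤ m := by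
  by_contra! hm
  have hm_top : m ≠ ⊤ := hm.ne_top
  obtain ⟨q, hq, hqm⟩ := h m.toReal ((ENNReal.lt_ofReal_iff_toReal_lt hm_top).1 hm)
  exact hq.1.not_ge ((ENNReal.ofReal_le_iff_le_toReal hm_top).1 hqm)

theorem eq_of_forall_rat_bounds {f : ℝ → ℝ} {u z : ℝ} (hu : u ∈ Ioo (0:ℝ) 1)
    (hf : ContinuousAt f u)
    (hle : ∀ a b : ℚ, 0 < (a:ℝ) → (a:ℝ) < b → (b:ℝ) < 1 → u < a → z ≤ f b)
    (hge : ∀ a b : ℚ, 0 < (a:ℝ) → (a:ℝ) < b → (b:ℝ) < 1 → (b:ℝ) < u → f a ≤ z) : z = f u := by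
  refine le_antisymm (le_of_not_gt fun hz => ?_) (le_of_not_gt fun hz => ?_)
  · obtain ⟨l, r, ⟨hl, hr⟩, hsub⟩ :=
      mem_nhds_iff_exists_Ioo_subset.1 (hf.eventually (gt_mem_nhds hz))
    obtain ⟨a, hua, ha⟩ := exists_rat_btwn (lt_min hr hu.2)
    obtain ⟨b, hab, hb⟩ := exists_rat_btwn ha
    exact (hle a b (hu.1.trans hua) hab (hb.trans_le (min_le_right _ _)) hua).not_gt
      (hsub ⟨hl.trans (hua.trans hab), hb.trans_le (min_le_left _ _)⟩)
  · obtain ⟨l, r, ⟨hl, hr⟩, hsub⟩ :=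
      mem_nhds_iff_exists_Ioo_subset.1 (hf.eventually (lt_mem_nhds hz))
    obtain ⟨a, ha, hau⟩ := exists_rat_btwn (max_lt hl hu.1)
    obtain ⟨b, hab, hbu⟩ := exists_rat_btwn hau
    exact (hge a b ((le_max_right _ _).trans_lt ha) hab (hbu.trans hu.2) hbu).not_gt
      (hsub ⟨(le_max_left _ _).trans_lt ha, hau.trans hr⟩)

structure IsStdUniform {Ω : Type*} [MeasurableSpace Ω] (P : Measure Ω) (U : Ω → ℝ) : Prop where
  measurable : Measurable U
  mem_Icc : ∀ ω, U ω ∈ Icc (0:ℝ) 1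
  map_eq : P.map U = volume.restrict (Icc 0 1)

namespace IsStdUniform

variable {Ω : Type*} [MeasurableSpace Ω] {P : Measure Ω} {U : Ω → ℝ}

theorem of_cdf [IsProbabilityMeasure P] (hU : Measurable U) (hI : ∀ ω, U ω ∈ Icc (0:ℝ) 1)
    (hcdf : ∀ x ∈ Icc (0:ℝ) 1, P {ω | U ω ≤ x} = ENNReal.ofReal x) : IsStdUniform P U := by
  refine ⟨hU, hI, ?_⟩
  have := Measure.isProbabilityMeasure_map (μ := P) hU.aemeasurable
  refine Measure.ext_of_Iic _ _ fun a => ?_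
  rw [Measure.map_apply hU measurableSet_Iic, Measure.restrict_apply measurableSet_Iic]
  rcases lt_or_ge a 0 with ha | ha
  · have hU : U ⁻¹' Iic a = ∅ :=
      eq_empty_of_forall_notMem fun ω hω => (hI ω).1.not_gt (lt_of_le_of_lt hω ha)
    have hI : Iic a ∩ Icc 0 1 = ∅ :=
      eq_empty_of_forall_notMem fun t ht => ht.2.1.not_gt (lt_of_le_of_lt ht.1 ha)
    simp [hU, hI]
  rcases le_or_gt a 1 with ha1 | ha1
  · rw [show Iic a ∩ Icc 0 1 = Icc 0 a by ext; simp; grind, Real.volume_Icc, sub_zero]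
    exact hcdf a ⟨ha, ha1⟩
  · have hU : U ⁻¹' Iic a = univ := eq_univ_of_forall fun ω => (hI ω).2.trans ha1.le
    rw [hU, inter_eq_right.2 fun t ht => ht.2.trans ha1.le]
    simp

variable (hU : IsStdUniform P U)
include hU

theorem measure_preimage {S : Set ℝ} (hS : MeasurableSet S) :
    P (U ⁻¹' S) = volume (S ∩ Icc 0 1) := by
  rw [← Measure.map_apply hU.measurable hS, hU.map_eq, Measure.restrict_apply hS]

theorem measure_le {x : ℝ} (hx : x ∈ Icc (0:ℝ) 1) : P {ω | U ω ≤ x} = ENNReal.ofReal x := by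
  change P (U ⁻¹' Iic x) = _
  rw [hU.measure_preimage measurableSet_Iic,
    show Iic x ∩ Icc 0 1 = Icc 0 x by ext; simp; grind, Real.volume_Icc, sub_zero]

theorem measure_lt {x : ℝ} (hx : x ∈ Icc (0:ℝ) 1) : P {ω | U ω < x} = ENNReal.ofReal x := by
  change P (U ⁻¹' Iio x) = _
  rw [hU.measure_preimage measurableSet_Iio,
    show Iio x ∩ Icc 0 1 = Ico 0 x by ext; simp; grind, Real.volume_Ico, sub_zero]

theorem measure_gt {x : ℝ} (hx : x ∈ Icc (0:ℝ) 1) :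
    P {ω | x < U ω} = ENNReal.ofReal (1 - x) := by
  change P (U ⁻¹' Ioi x) = _
  rw [hU.measure_preimage measurableSet_Ioi,
    show Ioi x ∩ Icc 0 1 = Ioc x 1 by ext; simp; grind, Real.volume_Ioc]

theorem measure_Ioo_pos {a b : ℝ} (ha : 0 ≤ a) (hab : a < b) (hb : b ≤ 1) :
    0 < P {ω | U ω ∈ Ioo a b} := by
  change 0 < P (U ⁻¹' Ioo a b)
  rw [hU.measure_preimage measurableSet_Ioo,
    inter_eq_left.2 (Ioo_subset_Icc_self.trans (Icc_subset_Icc ha hb)), Real.volume_Ioo]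
  simpa using hab

theorem ae_comp {p : ℝ → Prop} (h : ∀ᵐ t ∂volume.restrict (Icc (0:ℝ) 1), p t) :
    ∀ᵐ ω ∂P, p (U ω) :=
  ae_of_ae_map hU.measurable.aemeasurable (hU.map_eq ▸ h)

theorem isLeast_measure_le {p : ℝ} (hp : p ∈ Ioc (0:ℝ) 1) :
    IsLeast {x | ENNReal.ofReal p ≤ P {ω | U ω ≤ x}} p := by
  refine ⟨(hU.measure_le (Ioc_subset_Icc_self hp)).ge, fun x hx => le_of_not_gt fun hxp => ?_⟩
  have hy : max x 0 ∈ Icc (0:ℝ) 1 := ⟨le_max_right _ _, (max_lt hxp hp.1).le.trans hp.2⟩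
  have : P {ω | U ω ≤ x} < ENNReal.ofReal p :=
    calc P {ω | U ω ≤ x} ≤ P {ω | U ω ≤ max x 0} :=
          measure_mono fun ω (hω : U ω ≤ x) => le_max_of_le_left hω
      _ = ENNReal.ofReal (max x 0) := hU.measure_le hy
      _ < ENNReal.ofReal p := (ENNReal.ofReal_lt_ofReal_iff hp.1).2 (max_lt hxp hp.1)
  exact this.not_ge hx

theorem Q_eq : ∀ p ∈ Icc (0:ℝ) 1, Q P U p = p :=
  Q_eq_of_isLeast (φ := id) monotoneOn_id (tendsto_id.mono_left nhdsWithin_le_nhds)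
    fun _ => hU.isLeast_measure_le

theorem ae_continuousAt {f : ℝ → ℝ} (hf : MonotoneOn f (Icc 0 1)) :
    ∀ᵐ ω ∂P, U ω ∈ Ioo (0:ℝ) 1 ∧ ContinuousAt f (U ω) :=
  hU.ae_comp (ae_restrict_Icc_continuousAt hf)

end IsStdUniform

theorem Atomless.exists_between {Ω : Type*} [MeasurableSpace Ω] {P : Measure Ω}
    [IsFiniteMeasure P] (hP : Atomless P) {A B : Set Ω} (hA : MeasurableSet A)
    (hB : MeasurableSet B) (hAB : A ⊆ B) {r : ENNReal} (hAr : P A ≤ r) (hrB : r ≤ P B) :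
    ∃ C, A ⊆ C ∧ C ⊆ B ∧ MeasurableSet C ∧ P C = r := by
  obtain ⟨D, hD, hDm, hDr⟩ := hP (B \ A) (hB.diff hA) (r - P A) <| by
    rw [measure_sdiff hAB hA.nullMeasurableSet (measure_ne_top _ _)]
    exact tsub_le_tsub_right hrB _
  refine ⟨A ∪ D, subset_union_left, union_subset hAB (hD.trans sdiff_subset), hA.union hDm, ?_⟩
  rw [measure_union (disjoint_sdiff_right.mono_right hD) hDm, hDr, add_tsub_cancel_of_le hAr]

noncomputable def dyadic (n k : ℕ) : ℝ := min (k / 2 ^ n) 1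

theorem dyadic_two_mul (n k : ℕ) : dyadic (n + 1) (2 * k) = dyadic n k := by
  simp only [dyadic]
  congr 1
  push_cast
  field_simp
  ring

theorem dyadic_mono (n : ℕ) : Monotone (dyadic n) := fun k k' h =>
  min_le_min_right _ (div_le_div_of_nonneg_right (by exact_mod_cast h) (by positivity))

noncomputable def dyadicInf {Ω : Type*} (S : ℕ → ℕ → Set Ω) (ω : Ω) : ℝ :=
  sInf {x : ℝ | ∃ n k : ℕ, ω ∈ S n k ∧ x = k / 2 ^ n}

theorem dyadicInf_le_of_mem {Ω : Type*} {S : ℕ → ℕ → Set Ω} {ω : Ω} {n k : ℕ} (hω : ω ∈ S n k) :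
    dyadicInf S ω ≤ k / 2 ^ n :=
  csInf_le ⟨0, by rintro _ ⟨n, k, -, rfl⟩; positivity⟩ ⟨n, k, hω, rfl⟩

section Dyadic

variable {Ω : Type*} [MeasurableSpace Ω] {P : Measure Ω}

/-- `s k` plays the role of the event `{U ≤ k / 2 ^ n}` for the uniform variable `U` that
`dyadicInf` builds out of a compatible family of such chains. -/
structure IsDyadicChain (P : Measure Ω) (n : ℕ) (s : ℕ → Set Ω) : Prop where
  measurableSet : ∀ k, MeasurableSet (s k)
  mono : Monotone s
  measure_eq : ∀ k, P (s k) = ENNReal.ofReal (dyadic n k)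
  eq_univ : ∀ k, 2 ^ n ≤ k → s k = univ

theorem isDyadicChain_zero [IsProbabilityMeasure P] :
    IsDyadicChain P 0 fun k => if k = 0 then ∅ else univ := by
  refine ⟨fun k => ?_, fun k k' hk => ?_, fun k => ?_, fun k hk => if_neg (by simp_all; omega)⟩
  · split_ifs <;> simp
  · split_ifs <;> simp_all
  · rcases Nat.eq_zero_or_pos k with rfl | hk
    · simp [dyadic]
    · simp [hk.ne', dyadic, show (1:ℝ) ≤ k by exact_mod_cast hk]

theorem IsDyadicChain.exists_refinement [IsProbabilityMeasure P] (hP : Atomless P) {n : ℕ}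
    {s : ℕ → Set Ω} (hs : IsDyadicChain P n s) :
    ∃ t, IsDyadicChain P (n + 1) t ∧ ∀ k, t (2 * k) = s k := by
  have hex (j : ℕ) : ∃ C, s j ⊆ C ∧ C ⊆ s (j + 1) ∧ MeasurableSet C ∧
      P C = ENNReal.ofReal (dyadic (n + 1) (2 * j + 1)) := by
    refine hP.exists_between (hs.measurableSet j) (hs.measurableSet (j + 1)) (hs.mono j.le_succ)
      ?_ ?_ <;> rw [hs.measure_eq, ← dyadic_two_mul n] <;>
      exact ENNReal.ofReal_le_ofReal (dyadic_mono _ (by omega))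
  choose C hsC hCs hCm hCP using hex
  set t : ℕ → Set Ω := fun k => if k % 2 = 0 then s (k / 2) else C (k / 2)
  have ht_even (j : ℕ) : t (2 * j) = s j := by simp [t]
  have ht_odd (j : ℕ) : t (2 * j + 1) = C j := by
    simp only [t, if_neg (show (2 * j + 1) % 2 ≠ 0 by omega)]; congr; omega
  have ht (k : ℕ) : ∃ j, (k = 2 * j ∨ k = 2 * j + 1) := ⟨k / 2, by omega⟩
  refine ⟨t, ⟨fun k => ?_, monotone_nat_of_le_succ fun k => ?_, fun k => ?_, fun k hk => ?_⟩,
    ht_even⟩ <;> obtain ⟨j, rfl | rfl⟩ := ht k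
  · exact ht_even j ▸ hs.measurableSet j
  · exact ht_odd j ▸ hCm j
  · rw [ht_even, ht_odd]; exact hsC j
  · rw [ht_odd, show 2 * j + 1 + 1 = 2 * (j + 1) by ring, ht_even]; exact hCs j
  · rw [ht_even, hs.measure_eq, dyadic_two_mul]
  · rw [ht_odd, hCP]
  · rw [ht_even, hs.eq_univ j (by rw [pow_succ] at hk; omega)]
  · rw [ht_odd, ← univ_subset_iff, ← hs.eq_univ j (by rw [pow_succ] at hk; omega)]
    exact hsC j

structure IsDyadicFamily (P : Measure Ω) (S : ℕ → ℕ → Set Ω) : Prop where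
  chain : ∀ n, IsDyadicChain P n (S n)
  two_mul : ∀ n k, S (n + 1) (2 * k) = S n k

theorem exists_isDyadicFamily [IsProbabilityMeasure P] (hP : Atomless P) :
    ∃ S, IsDyadicFamily P S := by
  choose t ht ht₂ using fun n (s : {s // IsDyadicChain P n s}) => s.2.exists_refinement hP
  let F (n : ℕ) : {s // IsDyadicChain P n s} :=
    Nat.rec ⟨_, isDyadicChain_zero⟩ (fun n s => ⟨t n s, ht n s⟩) n
  exact ⟨fun n => (F n).1, fun n => (F n).2, fun n k => ht₂ n (F n) k⟩

namespace IsDyadicFamily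

variable {S : ℕ → ℕ → Set Ω} (hS : IsDyadicFamily P S)
include hS

theorem pow_mul (j n k : ℕ) : S (n + j) (2 ^ j * k) = S n k := by
  induction j generalizing k with
  | zero => simp
  | succ j ih => rw [← add_assoc, pow_succ', mul_assoc, hS.two_mul, ih]

theorem subset_of_le {n m k k' : ℕ} (h : (k : ℝ) / 2 ^ n ≤ k' / 2 ^ m) : S n k ⊆ S m k' := by
  rw [← hS.pow_mul m n k, ← hS.pow_mul n m k', add_comm m n]
  refine (hS.chain (n + m)).mono ?_
  rw [div_le_div_iff₀ (by positivity) (by positivity)] at h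
  rw [mul_comm (2 ^ m), mul_comm (2 ^ n)]
  exact_mod_cast h

theorem one_mem_dyadicInf_set (ω : Ω) : (1 : ℝ) ∈ {x : ℝ | ∃ n k : ℕ, ω ∈ S n k ∧ x = k / 2 ^ n} :=
  ⟨0, 1, by simp [(hS.chain 0).eq_univ 1 le_rfl], by simp⟩

theorem exists_mem_of_dyadicInf_lt {ω : Ω} {x : ℝ} (h : dyadicInf S ω < x) :
    ∃ n k : ℕ, (k : ℝ) / 2 ^ n < x ∧ ω ∈ S n k := by
  obtain ⟨_, ⟨n, k, hω, rfl⟩, hx⟩ := exists_lt_of_csInf_lt ⟨1, hS.one_mem_dyadicInf_set ω⟩ h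
  exact ⟨n, k, hx, hω⟩

theorem mem_of_dyadicInf_lt {ω : Ω} {n k : ℕ} (h : dyadicInf S ω < k / 2 ^ n) : ω ∈ S n k := by
  obtain ⟨n', k', hk', hω⟩ := hS.exists_mem_of_dyadicInf_lt h
  exact hS.subset_of_le hk'.le hω

theorem dyadicInf_mem_Icc (ω : Ω) : dyadicInf S ω ∈ Icc (0:ℝ) 1 :=
  ⟨le_csInf ⟨1, hS.one_mem_dyadicInf_set ω⟩ (by rintro _ ⟨n, k, -, rfl⟩; positivity),
    by simpa using dyadicInf_le_of_mem (n := 0) (k := 1) ((hS.chain 0).eq_univ 1 le_rfl ▸ trivial)⟩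

theorem measurable_dyadicInf : Measurable (dyadicInf S) := by
  refine measurable_of_Iio fun x => ?_
  have : dyadicInf S ⁻¹' Iio x = ⋃ (n : ℕ) (k : ℕ) (_ : (k : ℝ) / 2 ^ n < x), S n k := by
    ext ω
    simp only [mem_preimage, mem_Iio, mem_iUnion, exists_prop]
    exact ⟨hS.exists_mem_of_dyadicInf_lt,
      fun ⟨n, k, hk, hω⟩ => (dyadicInf_le_of_mem hω).trans_lt hk⟩
  rw [this]
  exact .iUnion fun n => .iUnion fun k => .iUnion fun _ => (hS.chain n).measurableSet k

theorem measure_dyadicInf_le [IsProbabilityMeasure P] {x : ℝ} (hx : x ∈ Icc (0:ℝ) 1) :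
    P {ω | dyadicInf S ω ≤ x} = ENNReal.ofReal x := by
  set m := P {ω | dyadicInf S ω ≤ x}
  have hbound (n : ℕ) : |m.toReal - x| ≤ 1 / 2 ^ n := by
    set k := ⌊x * 2 ^ n⌋₊
    have h2 : (0:ℝ) < 2 ^ n := by positivity
    have hk : (k : ℝ) / 2 ^ n ≤ x := by
      rw [div_le_iff₀ h2]; exact Nat.floor_le (by have := hx.1; positivity)
    have hk₁ : x < ((k + 1 : ℕ) : ℝ) / 2 ^ n := by
      rw [lt_div_iff₀ h2]; push_cast; exact Nat.lt_floor_add_one _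
    have hlow : ENNReal.ofReal (k / 2 ^ n) ≤ m := by
      rw [← min_eq_left (hk.trans hx.2), ← dyadic, ← (hS.chain n).measure_eq]
      exact measure_mono fun ω hω => (dyadicInf_le_of_mem hω).trans hk
    have hup : m ≤ ENNReal.ofReal ((k + 1 : ℕ) / 2 ^ n) :=
      calc m ≤ P (S n (k + 1)) := measure_mono fun ω (hω : dyadicInf S ω ≤ x) =>
            hS.mem_of_dyadicInf_lt (hω.trans_lt hk₁)
        _ ≤ ENNReal.ofReal ((k + 1 : ℕ) / 2 ^ n) := by
            rw [(hS.chain n).measure_eq]; exact ENNReal.ofReal_le_ofReal (min_le_left _ _)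
    have hlow' := (ENNReal.ofReal_le_iff_le_toReal (measure_ne_top _ _)).1 hlow
    have hup' := ENNReal.toReal_le_of_le_ofReal (by positivity) hup
    push_cast at hk₁ hup'
    rw [add_div] at hk₁ hup'
    rw [abs_le]
    constructor <;> linarith
  have : m.toReal = x := eq_of_forall_dist_le fun ε hε => by
    obtain ⟨n, hn⟩ := exists_pow_lt_of_lt_one hε (by norm_num : (1 / 2 : ℝ) < 1)
    exact (hbound n).trans (one_div_pow (2:ℝ) n ▸ hn.le)
  rw [← this, ENNReal.ofReal_toReal (measure_ne_top _ _)]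

end IsDyadicFamily

end Dyadic

theorem exists_isStdUniform {Ω : Type*} [MeasurableSpace Ω] {P : Measure Ω}
    [IsProbabilityMeasure P] (hP : Atomless P) : ∃ U, IsStdUniform P U := by
  obtain ⟨S, hS⟩ := exists_isDyadicFamily hP
  exact ⟨_, .of_cdf hS.measurable_dyadicInf hS.dyadicInf_mem_Icc fun _ => hS.measure_dyadicInf_le⟩

section Composition

variable {Ω : Type*} [MeasurableSpace Ω] {P : Measure Ω} [IsProbabilityMeasure P] {Z : Ω → ℝ}

theorem isLeast_measure_comp_le (hZ : Measurable Z) {f g h : ℝ → ℝ}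
    (hQ : ∀ p ∈ Icc (0:ℝ) 1, Q P Z p = g p) (hf : MonotoneOn f (Icc 0 1))
    (hfl : ∀ p ∈ Ioc (0:ℝ) 1, Tendsto f (𝓝[<] p) (𝓝 (f p))) (hh : Monotone h)
    (hfg : ∀ᵐ t ∂volume.restrict (Icc (0:ℝ) 1), f t = h (g t)) {p : ℝ} (hp : p ∈ Ioc (0:ℝ) 1) :
    IsLeast {x | ENNReal.ofReal p ≤ P {ω | h (Z ω) ≤ x}} (f p) := by
  have hgood (a : ℝ) (ha : a < p) : ∃ q ∈ Ioo a p, q ∈ Ioo (0:ℝ) 1 ∧ f q = h (g q) := by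
    obtain ⟨q, hq, hfq⟩ :=
      exists_mem_Ioo_of_ae_restrict_Icc hfg (le_max_right a 0) (max_lt ha hp.1) hp.2
    exact ⟨q, ⟨(le_max_left _ _).trans_lt hq.1, hq.2⟩,
      ⟨(le_max_right _ _).trans_lt hq.1, hq.2.trans_le hp.2⟩, hfq⟩
  refine ⟨ENNReal.ofReal_le_of_forall_exists fun a ha => ?_, fun x hx => le_of_not_gt fun hxp => ?_⟩
  · obtain ⟨q, hq, hq01, hfq⟩ := hgood a ha
    refine ⟨q, hq, ?_⟩
    calc ENNReal.ofReal q ≤ P {ω | Z ω ≤ g q} :=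
          leftQuantile_eq_of_Q_eq hQ hq01 ▸ ofReal_le_measure_le_leftQuantile hZ hq01
      _ ≤ P {ω | h (Z ω) ≤ f p} := measure_mono fun ω (hω : Z ω ≤ g q) =>
          (hh hω).trans (hfq ▸ hf (Ioo_subset_Icc_self hq01) (Ioc_subset_Icc_self hp) hq.2.le)
  · obtain ⟨a, ha, hax⟩ :=
      mem_nhdsLT_iff_exists_Ioo_subset.1 ((hfl p hp).eventually (lt_mem_nhds hxp))
    obtain ⟨q, hq, hq01, hfq⟩ := hgood a ha
    have hxq : x < h (g q) := hfq ▸ hax hq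
    have : P {ω | h (Z ω) ≤ x} ≤ ENNReal.ofReal q :=
      calc P {ω | h (Z ω) ≤ x} ≤ P {ω | Z ω < g q} := measure_mono fun ω (hω : h (Z ω) ≤ x) =>
            lt_of_not_ge fun hge => (hxq.trans_le (hh hge)).not_ge hω
        _ ≤ ENNReal.ofReal q :=
            leftQuantile_eq_of_Q_eq hQ hq01 ▸ measure_lt_leftQuantile_le hZ hq01.1
    exact (hx.trans this).not_gt ((ENNReal.ofReal_lt_ofReal_iff hp.1).2 hq.2)

theorem Q_comp_eq_of_ae_eq (hZ : Measurable Z) {f g h : ℝ → ℝ}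
    (hQ : ∀ p ∈ Icc (0:ℝ) 1, Q P Z p = g p) (hf : MemG f) (hh : Monotone h)
    (hfg : ∀ᵐ t ∂volume.restrict (Icc (0:ℝ) 1), f t = h (g t)) :
    ∀ p ∈ Icc (0:ℝ) 1, Q P (fun ω => h (Z ω)) p = f p :=
  Q_eq_of_isLeast hf.1 hf.2.1 fun _ => isLeast_measure_comp_le hZ hQ hf.1 hf.2.2 hh hfg

theorem GComonotone.of_prec {d : ℕ} {X : Fin d → Ω → ℝ} {f g : ℝ → ℝ} (hf : MemG f)
    (hfg : Prec f g) (hX : GComonotone P g X) : GComonotone P f X := by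
  obtain ⟨h, hh, hfgh⟩ := hfg
  obtain ⟨Z, hZ, hQ, hXZ⟩ := hX
  exact ⟨fun ω => h (Z ω), hh.measurable.comp hZ, Q_comp_eq_of_ae_eq hZ hQ hf hh hfgh,
    fun i => (hXZ i).comp_monotone hh⟩

end Composition

namespace IsStdUniform

variable {Ω : Type*} [MeasurableSpace Ω] {P : Measure Ω} {U : Ω → ℝ}
  (hU : IsStdUniform P U)
include hU

theorem measurable_comp {g : ℝ → ℝ} (hg : MonotoneOn g (Icc 0 1)) :
    Measurable fun ω => g (U ω) := by
  obtain ⟨g', hg', hgg'⟩ := hg.exists_monotone_eqOn_Icc zero_le_one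
  convert hg'.measurable.comp hU.measurable using 1
  exact funext fun ω => hgg' (hU.mem_Icc ω)

theorem Q_comp [IsProbabilityMeasure P] {g : ℝ → ℝ} (hg : MemG g) :
    ∀ p ∈ Icc (0:ℝ) 1, Q P (fun ω => g (U ω)) p = g p := by
  obtain ⟨g', hg', hgg'⟩ := hg.1.exists_monotone_eqOn_Icc zero_le_one
  simp only [hgg' (hU.mem_Icc _)]
  exact Q_comp_eq_of_ae_eq hU.measurable hU.Q_eq hg hg'
    (ae_restrict_of_forall_mem measurableSet_Icc hgg')

end IsStdUniform

namespace ComonotonePair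

variable {Ω : Type*} [MeasurableSpace Ω] {P : Measure Ω} [IsProbabilityMeasure P] {U Z : Ω → ℝ}
  {f : ℝ → ℝ}

theorem ae_forall_rat_le (h : ComonotonePair P U Z) (hU : IsStdUniform P U) (hZ : Measurable Z)
    (hQ : ∀ p ∈ Icc (0:ℝ) 1, Q P Z p = f p) :
    ∀ᵐ ω ∂P, ∀ a b : ℚ, 0 < (a:ℝ) → (a:ℝ) < b → (b:ℝ) < 1 → U ω < a → Z ω ≤ f b := by
  refine ae_all_iff.2 fun a => ae_all_iff.2 fun b => ?_
  simp only [eventually_imp_distrib_left]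
  intro ha hab hb
  have hb01 : (b:ℝ) ∈ Ioo 0 1 := ⟨ha.trans hab, hb⟩
  refine h.ae_le_of_measure_lt ?_
  calc P {ω | U ω < a} = ENNReal.ofReal a := hU.measure_lt ⟨ha.le, (hab.trans hb).le⟩
    _ < ENNReal.ofReal b := (ENNReal.ofReal_lt_ofReal_iff hb01.1).2 hab
    _ ≤ P {ω | Z ω ≤ f b} :=
        leftQuantile_eq_of_Q_eq hQ hb01 ▸ ofReal_le_measure_le_leftQuantile hZ hb01

theorem ae_forall_rat_ge (h : ComonotonePair P U Z) (hU : IsStdUniform P U) (hZ : Measurable Z)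
    (hQ : ∀ p ∈ Icc (0:ℝ) 1, Q P Z p = f p) :
    ∀ᵐ ω ∂P, ∀ a b : ℚ, 0 < (a:ℝ) → (a:ℝ) < b → (b:ℝ) < 1 → (b:ℝ) < U ω → f a ≤ Z ω := by
  refine ae_all_iff.2 fun a => ae_all_iff.2 fun b => ?_
  simp only [eventually_imp_distrib_left]
  intro ha hab hb
  have ha01 : (a:ℝ) ∈ Ioo 0 1 := ⟨ha, hab.trans hb⟩
  refine h.ae_ge_of_measure_lt ?_
  have hcompl : {ω | f a ≤ Z ω} = {ω | Z ω < f a}ᶜ := by ext; simp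
  calc P {ω | (b:ℝ) < U ω} = ENNReal.ofReal (1 - b) := hU.measure_gt ⟨(ha.trans hab).le, hb.le⟩
    _ < ENNReal.ofReal (1 - a) := (ENNReal.ofReal_lt_ofReal_iff (by linarith)).2 (by linarith)
    _ = 1 - ENNReal.ofReal a := by rw [ENNReal.ofReal_sub _ ha.le, ENNReal.ofReal_one]
    _ ≤ P {ω | f a ≤ Z ω} := by
        rw [hcompl, prob_compl_eq_one_sub (measurableSet_lt hZ measurable_const)]
        exact tsub_le_tsub_left
          (leftQuantile_eq_of_Q_eq hQ ha01 ▸ measure_lt_leftQuantile_le hZ ha) 1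

theorem ae_eq_comp_of_isStdUniform (h : ComonotonePair P U Z) (hU : IsStdUniform P U)
    (hZ : Measurable Z) (hf : MonotoneOn f (Icc 0 1)) (hQ : ∀ p ∈ Icc (0:ℝ) 1, Q P Z p = f p) :
    Z =ᵐ[P] fun ω => f (U ω) := by
  filter_upwards [h.ae_forall_rat_le hU hZ hQ, h.ae_forall_rat_ge hU hZ hQ,
    hU.ae_continuousAt hf] with ω hle hge ⟨hu, hc⟩
  exact eq_of_forall_rat_bounds hu hc hle hge

end ComonotonePair

noncomputable def reflectIoo (s t u : ℝ) : ℝ := if u ∈ Ioo s t then s + t - u else u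

theorem measurable_reflectIoo (s t : ℝ) : Measurable (reflectIoo s t) :=
  Measurable.ite measurableSet_Ioo (measurable_const.sub measurable_id) measurable_id

theorem reflectIoo_mem_Icc {s t u : ℝ} (hs : 0 ≤ s) (ht : t ≤ 1) (hu : u ∈ Icc (0:ℝ) 1) :
    reflectIoo s t u ∈ Icc (0:ℝ) 1 := by
  unfold reflectIoo
  split_ifs with h
  · exact ⟨by linarith [h.2], by linarith [h.1]⟩
  · exact hu

theorem MonotoneOn.comp_reflectIoo {g : ℝ → ℝ} (hg : MonotoneOn g (Icc 0 1)) {s t : ℝ}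
    (hs : 0 ≤ s) (ht : t ≤ 1) (hgst : g s = g t) (u : ℝ) : g (reflectIoo s t u) = g u := by
  have hsub : Icc s t ⊆ Icc 0 1 := Icc_subset_Icc hs ht
  have hconst : ∀ v ∈ Icc s t, g v = g s := fun v hv =>
    le_antisymm (hgst ▸ hg (hsub hv) (hsub (right_mem_Icc.2 (hv.1.trans hv.2))) hv.2)
      (hg (hsub (left_mem_Icc.2 (hv.1.trans hv.2))) (hsub hv) hv.1)
  unfold reflectIoo
  split_ifs with hu
  · rw [hconst u (Ioo_subset_Icc_self hu), hconst _ ⟨by linarith [hu.2], by linarith [hu.1]⟩]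
  · rfl

namespace IsStdUniform

variable {Ω : Type*} [MeasurableSpace Ω] {P : Measure Ω} [IsProbabilityMeasure P] {U : Ω → ℝ}
  (hU : IsStdUniform P U)
include hU

theorem gComonotone_reflectIoo {g : ℝ → ℝ} (hg : MemG g) {s t : ℝ} (hs : 0 ≤ s) (ht : t ≤ 1)
    (hgst : g s = g t) : GComonotone P g ![U, fun ω => reflectIoo s t (U ω)] := by
  refine ⟨fun ω => g (U ω), hU.measurable_comp hg.1, hU.Q_comp hg, fun i => ?_⟩
  fin_cases i
  · exact comonotonePair_comp_self hg.1 hU.mem_Icc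
  · show ComonotonePair P (fun ω => reflectIoo s t (U ω)) _
    simpa only [hg.1.comp_reflectIoo hs ht hgst] using comonotonePair_comp_self (P := P) hg.1
      fun ω => reflectIoo_mem_Icc hs ht (hU.mem_Icc ω)

theorem not_comonotonePair_reflectIoo {f : ℝ → ℝ} {s r c t : ℝ} (hs : 0 ≤ s) (hsr : s < r)
    (hrc : r ≤ c) (hct : c < t) (ht : t ≤ 1) (hf : ∀ u ∈ Ioo s r, ∀ v ∈ Ioo c t, f u < f v) :
    ¬ ComonotonePair P (fun ω => reflectIoo s t (U ω)) (fun ω => f (U ω)) := by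
  intro h
  have hσ : ∀ u ∈ Ioo s t, reflectIoo s t u = s + t - u := fun u hu => if_pos hu
  refine (h.measure_eq_zero_or (B := {ω | U ω ∈ Ioo c t}) (C := {ω | U ω ∈ Ioo s r}) ?_).elim
    (hU.measure_Ioo_pos (hs.trans (hsr.le.trans hrc)) hct ht).ne'
    (hU.measure_Ioo_pos hs hsr ((hrc.trans hct.le).trans ht)).ne'
  intro ω (hω : U ω ∈ Ioo c t) ω' (hω' : U ω' ∈ Ioo s r)
  rw [hσ _ ⟨hsr.trans_le (hrc.trans hω.1.le), hω.2⟩,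
    hσ _ ⟨hω'.1, hω'.2.trans_le (hrc.trans hct.le)⟩]
  exact mul_neg_of_neg_of_pos (by linarith [hω.1, hω'.2]) (sub_pos.2 (hf _ hω' _ hω))

end IsStdUniform

theorem eq_of_forall_gComonotone_imp {Ω : Type*} [MeasurableSpace Ω] {P : Measure Ω}
    [IsProbabilityMeasure P] (hP : Atomless P) {f g : ℝ → ℝ} (hf : MemG f) (hg : MemG g)
    (hR : ∀ (d : ℕ) (X : Fin d → Ω → ℝ), (∀ i, Measurable (X i)) →
      GComonotone P g X → GComonotone P f X)
    {s t : ℝ} (hs : 0 < s) (hst : s < t) (ht : t ≤ 1) (hgst : g s = g t) {r : ℝ}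
    (hr : r ∈ Ioc s t) : f r = f t := by
  by_contra hne
  have hfrt : f r < f t :=
    (hf.1 ⟨(hs.trans hr.1).le, hr.2.trans ht⟩ ⟨(hs.trans hst).le, ht⟩ hr.2).lt_of_ne hne
  have hrt : r < t := hr.2.lt_of_ne (by rintro rfl; exact hne rfl)
  obtain ⟨c, hc, hcf⟩ := mem_nhdsLT_iff_exists_Ioo_subset.1
    ((hf.2.2 t ⟨hs.trans hst, ht⟩).eventually (lt_mem_nhds hfrt))
  obtain ⟨U, hU⟩ := exists_isStdUniform hP
  obtain ⟨Z, hZ, hQ, hXZ⟩ := hR 2 ![U, fun ω => reflectIoo s t (U ω)]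
    (fun i => by
      fin_cases i
      exacts [hU.measurable, (measurable_reflectIoo s t).comp hU.measurable])
    (hU.gComonotone_reflectIoo hg hs.le ht hgst)
  have hZU : Z =ᵐ[P] fun ω => f (U ω) := (hXZ 0).ae_eq_comp_of_isStdUniform hU hZ hf.1 hQ
  refine hU.not_comonotonePair_reflectIoo hs.le hr.1 (le_max_right c r) (max_lt hc hrt) ht
    (fun u hu v hv => ?_) ((hXZ 1).congr_right hZU)
  calc f u ≤ f r := hf.1 ⟨(hs.trans hu.1).le, hu.2.le.trans (hr.2.trans ht)⟩
        ⟨(hs.trans hr.1).le, hr.2.trans ht⟩ hu.2.le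
    _ < f v := hcf ⟨(le_max_left _ _).trans_lt hv.1, hv.2⟩

theorem prec_of_forall_eq_of_eq {f g : ℝ → ℝ} (hf : MonotoneOn f (Icc 0 1))
    (hg : MonotoneOn g (Icc 0 1))
    (hC : ∀ s t, 0 < s → s < t → t ≤ 1 → g s = g t → ∀ r ∈ Ioc s t, f r = f t) : Prec f g := by
  set A : ℝ → Set ℝ := fun y => insert (f 0) (f '' {u | u ∈ Ioo (0:ℝ) 1 ∧ g u ≤ y})
  have hA : ∀ y, BddAbove (A y) := fun y => ⟨f 1, by
    rintro _ (rfl | ⟨u, ⟨hu, -⟩, rfl⟩)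
    exacts [hf ⟨le_rfl, zero_le_one⟩ ⟨zero_le_one, le_rfl⟩ zero_le_one,
      hf (Ioo_subset_Icc_self hu) ⟨zero_le_one, le_rfl⟩ hu.2.le]⟩
  refine ⟨fun y => sSup (A y), fun y y' hy => csSup_le_csSup (hA y') ⟨f 0, mem_insert _ _⟩
    (insert_subset_insert <| image_mono <| ofPred_subset_ofPred.2 fun u hu =>
      ⟨hu.1, hu.2.trans hy⟩), ?_⟩
  filter_upwards [ae_restrict_Icc_continuousAt hf] with t ⟨ht, hc⟩
  refine (IsGreatest.csSup_eq (s := A (g t)) ⟨mem_insert_of_mem _ ⟨t, ⟨ht, le_rfl⟩, rfl⟩, ?_⟩).symm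
  rintro _ (rfl | ⟨u, ⟨hu, hgu⟩, rfl⟩)
  · exact hf ⟨le_rfl, zero_le_one⟩ (Ioo_subset_Icc_self ht) ht.1.le
  rcases le_or_gt u t with hut | htu
  · exact hf (Ioo_subset_Icc_self hu) (Ioo_subset_Icc_self ht) hut
  have hgtu : g t = g u :=
    le_antisymm (hg (Ioo_subset_Icc_self ht) (Ioo_subset_Icc_self hu) htu.le) hgu
  have hlim : Tendsto f (𝓝[>] t) (𝓝 (f u)) := tendsto_const_nhds.congr' <| by
    filter_upwards [Ioc_mem_nhdsGT htu] with r hr using (hC t u ht.1 htu hu.2.le hgtu r hr).symm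
  exact (tendsto_nhds_unique (hc.tendsto.mono_left nhdsWithin_le_nhds) hlim).ge

/-- For `f, g ∈ 𝒢`, `f ≾ g` iff every `g`-comonotonic random vector is
`f`-comonotonic. -/
theorem stmt_6 {Ω : Type*} [MeasurableSpace Ω] (P : MeasureTheory.Measure Ω)
    [MeasureTheory.IsProbabilityMeasure P] (hP : Atomless P)
    (f g : ℝ → ℝ) (hf : MemG f) (hg : MemG g) :
    Prec f g ↔
      ∀ (d : ℕ) (X : Fin d → Ω → ℝ), (∀ i, Measurable (X i)) →
        GComonotone P g X → GComonotone P f X :=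
  ⟨fun hfg _ _ _ hX => hX.of_prec hf hfg, fun hR => prec_of_forall_eq_of_eq hf.1 hg.1
    fun _ _ hs hst ht hgst _ hr => eq_of_forall_gComonotone_imp hP hf hg hR hs hst ht hgst hr⟩
end
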